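/- arXiv:1912.09276 — 11 statements merged into one kernel-verified Lean document; each statement's English description precedes it below -/
import Mathlib

section
/- Let μ ≥ 0 and let f : V → ℝ be μ-convex in the subgradient sense, with global minimizer x*. Then for every β ≥ 0, every x, v ∈ V, every γ > 0 and every subgradient p of f at x, one has -[⟨p, v - x - βp⟩ + ⟨γ(v - x*), (μ/γ)(x - v) - (1/γ)p⟩ + ((μ - γ)/2)‖v - x*‖²] ≥ L(x, v, γ) + β‖p‖² + (μ/2)‖x - v‖². -/
open scoped RealInnerProductSpace

/-- Strong Lyapunov property (non-smooth case): for `f` which is `μ`-convex in the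
subgradient sense with global minimizer `x*`, for all `β ≥ 0`, `x, v ∈ V`, `γ > 0`
and every subgradient `p` of `f` at `x`,
`-∂L(x,v,γ;p) ⋅ G(x,v,γ,β;p) ≥ L(x,v,γ) + β‖p‖² + (μ/2)‖x-v‖²`. -/
theorem strong_lyapunov_nonsmooth
    {V : Type*} [NormedAddCommGroup V] [InnerProductSpace ℝ V] [CompleteSpace V]
    (μ : ℝ) (hμ : 0 ≤ μ) (f : V → ℝ)
    (hconv : ∀ z w q : V, (∀ u, f u ≥ f w + ⟪q, u - w⟫) →
      f z - f w - ⟪q, z - w⟫ ≥ μ / 2 * ‖z - w‖ ^ 2)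
    (xstar : V) (hmin : ∀ z, f xstar ≤ f z)
    (β : ℝ) (hβ : 0 ≤ β) (x v : V) (γ : ℝ) (hγ : 0 < γ)
    (p : V) (hp : ∀ u, f u ≥ f x + ⟪p, u - x⟫) :
    -(⟪p, v - x - β • p⟫
        + ⟪γ • (v - xstar), (μ / γ) • (x - v) - (1 / γ) • p⟫
        + (μ - γ) / 2 * ‖v - xstar‖ ^ 2)
      ≥ (f x - f xstar + γ / 2 * ‖v - xstar‖ ^ 2) + β * ‖p‖ ^ 2
        + μ / 2 * ‖x - v‖ ^ 2 := by
  have hγ' : γ ≠ 0 := ne_of_gt hγ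
  have key := hconv xstar x p hp
  have h1 : ⟪γ • (v - xstar), (μ / γ) • (x - v) - (1 / γ) • p⟫
      = μ * ⟪v - xstar, x - v⟫ - ⟪v - xstar, p⟫ := by
    rw [inner_sub_right, real_inner_smul_left, real_inner_smul_left,
      real_inner_smul_right, real_inner_smul_right]
    field_simp
  have h2 : ⟪p, v - x - β • p⟫ = ⟪p, v - x⟫ - β * ‖p‖ ^ 2 := by
    rw [inner_sub_right, real_inner_smul_right, real_inner_self_eq_norm_sq]
  have h3 : ‖xstar - x‖ ^ 2
      = ‖x - v‖ ^ 2 + 2 * ⟪x - v, v - xstar⟫ + ‖v - xstar‖ ^ 2 := by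
    have : xstar - x = -((x - v) + (v - xstar)) := by abel
    rw [this, norm_neg, norm_add_sq_real]
  have h4 : ⟪p, xstar - x⟫ = ⟪p, v - x⟫ - ⟪v - xstar, p⟫ := by
    have h : xstar - x = (v - x) - (v - xstar) := by abel
    rw [h, inner_sub_right]
    congr 1
    exact real_inner_comm _ _
  have h5 : ⟪x - v, v - xstar⟫ = ⟪v - xstar, x - v⟫ := real_inner_comm _ _
  rw [h1, h2]
  rw [h4, h3, h5] at key
  nlinarith [key]
end

section
/- Let μ ≥ 0 and let f : V → ℝ be differentiable and μ-convex with global minimizer x*. Suppose at a time t the values x(t), v(t) ∈ V, γ(t) > 0, β(t) ≥ 0 and the derivatives satisfy the H-NAG system x'(t) = v(t) - x(t) - β(t)∇f(x(t)), γ(t)·v'(t) = μ(x(t) - v(t)) - ∇f(x(t)), γ'(t) = μ - γ(t). Then the derivative of the Lyapunov function along the trajectory satisfies ⟨∇f(x(t)), x'(t)⟩ + γ(t)⟨v(t) - x*, v'(t)⟩ + (γ'(t)/2)‖v(t) - x*‖² ≤ -L(x(t), v(t), γ(t)) - β(t)‖∇f(x(t))‖² - (μ/2)‖x(t) - v(t)‖².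 -/
open scoped RealInnerProductSpace

/-- Along a trajectory of the H-NAG system, the derivative of the Lyapunov function
`L(t) = f(x(t)) - f(x*) + (γ(t)/2)‖v(t)-x*‖²` at time `t` satisfies
`L'(t) ≤ -L(t) - β(t)‖∇f(x(t))‖² - (μ/2)‖x(t)-v(t)‖²`. -/
theorem hnag_lyapunov_derivative_bound
    {V : Type*} [NormedAddCommGroup V] [InnerProductSpace ℝ V] [CompleteSpace V]
    (μ : ℝ) (hμ : 0 ≤ μ) (f : V → ℝ) (f' : V → V)
    (hdiff : ∀ z, HasGradientAt f (f' z) z)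
    (hconv : ∀ z w : V, f z - f w - ⟪f' w, z - w⟫ ≥ μ / 2 * ‖z - w‖ ^ 2)
    (xstar : V) (hmin : ∀ z, f xstar ≤ f z)
    (x v : ℝ → V) (γ β : ℝ → ℝ) (t : ℝ) (xd vd : V) (γd : ℝ)
    (hx : HasDerivAt x xd t) (hv : HasDerivAt v vd t) (hγd : HasDerivAt γ γd t)
    (hγpos : 0 < γ t) (hβ : 0 ≤ β t)
    (ode1 : xd = v t - x t - β t • f' (x t))
    (ode2 : γ t • vd = μ • (x t - v t) - f' (x t))
    (ode3 : γd = μ - γ t) :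
    ⟪f' (x t), xd⟫ + γ t * ⟪v t - xstar, vd⟫ + γd / 2 * ‖v t - xstar‖ ^ 2
      ≤ -(f (x t) - f xstar + γ t / 2 * ‖v t - xstar‖ ^ 2)
        - β t * ‖f' (x t)‖ ^ 2 - μ / 2 * ‖x t - v t‖ ^ 2 := by
  have key : γ t * ⟪v t - xstar, vd⟫
      = μ * ⟪v t - xstar, x t - v t⟫ - ⟪v t - xstar, f' (x t)⟫ := by
    rw [← real_inner_smul_right, ode2, inner_sub_right, real_inner_smul_right]
  have hc := hconv xstar (x t)
  have e1 : ‖x t - v t‖ ^ 2 = ⟪x t - v t, x t - v t⟫ :=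
    (real_inner_self_eq_norm_sq _).symm
  have e2 : ‖v t - xstar‖ ^ 2 = ⟪v t - xstar, v t - xstar⟫ :=
    (real_inner_self_eq_norm_sq _).symm
  have e3 : ‖xstar - x t‖ ^ 2 = ⟪xstar - x t, xstar - x t⟫ :=
    (real_inner_self_eq_norm_sq _).symm
  rw [e3] at hc
  rw [ode1, ode3, key, e1, e2]
  simp only [inner_sub_left, inner_sub_right, real_inner_smul_left,
    real_inner_smul_right, real_inner_self_eq_norm_sq] at *
  nlinarith [real_inner_comm (x t) (v t), real_inner_comm (x t) xstar,
    real_inner_comm (v t) xstar, real_inner_comm (f' (x t)) (x t),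
    real_inner_comm (f' (x t)) (v t), real_inner_comm (f' (x t)) xstar]
end

section
/- Let μ ≥ 0 and let f : V → ℝ be continuously differentiable and μ-convex with global minimizer x*. Let β : [0,∞) → ℝ be continuous and nonnegative, and let x, v : [0,∞) → V and γ : [0,∞) → ℝ be continuously differentiable with γ(t) > 0, satisfying for all t ≥ 0: x'(t) = v(t) - x(t) - β(t)∇f(x(t)), γ(t)·v'(t) = μ(x(t) - v(t)) - ∇f(x(t)), γ'(t) = μ - γ(t). Then for every t ≥ 0, writing L(t) = f(x(t)) - f(x*) + (γ(t)/2)‖v(t) - x*‖², one has L(t) + ∫₀ᵗ e^{s - t} β(s)‖∇f(x(s))‖² ds ≤ e^{-t} L(0). -/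
open scoped RealInnerProductSpace

/-!
`L(t) = f(x(t)) - f(x*) + (γ(t)/2)‖v(t) - x*‖²` is a Lyapunov function of the H-NAG flow:
along the flow, the three equations and the `μ`-convexity inequality between `x(t)` and `x*` give
`L' + L + β‖∇f(x)‖² ≤ -(μ/2)‖x - v‖² ≤ 0`. Hence `eᵗ L(t) + ∫₀ᵗ eˢ β(s)‖∇f(x(s))‖² ds`
is antitone, which after multiplying by `e⁻ᵗ` is the claimed estimate.
-/

open Set Real

theorem HasGradientAt.comp_hasDerivAt {V : Type*} [NormedAddCommGroup V]
    [InnerProductSpace ℝ V] [CompleteSpace V] {f : V → ℝ} {g : V} {x : ℝ → V} {x' : V} {s : ℝ}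
    (hf : HasGradientAt f g (x s)) (hx : HasDerivAt x x' s) :
    HasDerivAt (fun u => f (x u)) ⟪g, x'⟫ s := by
  simpa [InnerProductSpace.toDual_apply_apply, Function.comp_def] using
    hf.hasFDerivAt.comp_hasDerivAt s hx

section Lyapunov

variable {V : Type*} [NormedAddCommGroup V] [InnerProductSpace ℝ V]

theorem hasDerivAt_hnagLyapunov [CompleteSpace V] {f : V → ℝ} {g : V} {x v : ℝ → V}
    {γ : ℝ → ℝ} {xd vd : V} {γd : ℝ} {s c : ℝ} (xstar : V)
    (hf : HasGradientAt f g (x s)) (hx : HasDerivAt x xd s) (hv : HasDerivAt v vd s)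
    (hγ : HasDerivAt γ γd s) :
    HasDerivAt (fun u => f (x u) - c + γ u / 2 * ‖v u - xstar‖ ^ 2)
      (⟪g, xd⟫ + (γd / 2 * ‖v s - xstar‖ ^ 2 + γ s * ⟪v s - xstar, vd⟫)) s := by
  have hnorm := (hv.sub_const xstar).norm_sq
  exact (((hf.comp_hasDerivAt hx).sub_const c).add ((hγ.div_const 2).mul hnorm)).congr_deriv
    (by ring)

theorem hnagLyapunov_deriv_add_le {μ β γ γd fx fstar : ℝ} {x v xstar g xd vd : V}
    (hμ : 0 ≤ μ) (hconv : fstar - fx - ⟪g, xstar - x⟫ ≥ μ / 2 * ‖xstar - x‖ ^ 2)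
    (hxd : xd = v - x - β • g) (hvd : γ • vd = μ • (x - v) - g) (hγd : γd = μ - γ) :
    (⟪g, xd⟫ + (γd / 2 * ‖v - xstar‖ ^ 2 + γ * ⟪v - xstar, vd⟫))
      + (fx - fstar + γ / 2 * ‖v - xstar‖ ^ 2) + β * ‖g‖ ^ 2 ≤ 0 := by
  set a := x - xstar
  set b := v - xstar
  have hxd' : xd = b - a - β • g := by rw [hxd]; simp only [a, b]; abel
  have hvd' : γ * ⟪b, vd⟫ = μ * ⟪a, b⟫ - μ * ‖b‖ ^ 2 - ⟪g, b⟫ := by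
    rw [← real_inner_smul_right, hvd, show x - v = a - b by simp only [a, b]; abel]
    simp only [inner_sub_right, inner_smul_right, real_inner_self_eq_norm_sq, real_inner_comm]
    ring
  have hconv' : fx - fstar - ⟪g, a⟫ ≤ -(μ / 2 * ‖a‖ ^ 2) := by
    rw [show xstar - x = -a by simp only [a]; abel, inner_neg_right, norm_neg] at hconv
    linarith
  have hab : 0 ≤ μ / 2 * ‖a - b‖ ^ 2 := by positivity
  rw [norm_sub_sq_real] at hab
  rw [hxd', hvd', hγd]
  simp only [inner_sub_right, real_inner_smul_right, real_inner_self_eq_norm_sq]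
  linarith

end Lyapunov

theorem add_integral_exp_sub_mul_le_exp_neg_mul {L L' c : ℝ → ℝ} {t : ℝ} (ht : 0 ≤ t)
    (hLc : ContinuousOn L (Icc 0 t)) (hL : ∀ s ∈ Ioo 0 t, HasDerivAt L (L' s) s)
    (hc : ContinuousOn c (Icc 0 t)) (hle : ∀ s ∈ Ioo 0 t, L' s + L s + c s ≤ 0) :
    L t + ∫ s in (0 : ℝ)..t, exp (s - t) * c s ≤ exp (-t) * L 0 := by
  set e : ℝ → ℝ := fun s => exp s * c s
  have he : ContinuousOn e (Icc 0 t) := continuous_exp.continuousOn.mul hc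
  set G : ℝ → ℝ := fun s => exp s * L s + ∫ u in (0 : ℝ)..s, e u
  have hGc : ContinuousOn G (Icc 0 t) := by
    refine (continuous_exp.continuousOn.mul hLc).add ?_
    rw [← uIcc_of_le ht] at he ⊢
    exact intervalIntegral.continuousOn_primitive_interval (he.integrableOn_compact isCompact_uIcc)
  have hG : ∀ s ∈ Ioo 0 t, HasDerivAt G (exp s * (L' s + L s + c s)) s := by
    intro s hs
    have hes : ContinuousAt e s := he.continuousAt (Icc_mem_nhds hs.1 hs.2)
    have hprim : HasDerivAt (fun s => ∫ u in (0 : ℝ)..s, e u) (e s) s :=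
      intervalIntegral.integral_hasDerivAt_right
        ((he.mono (uIcc_of_le hs.1.le ▸ Icc_subset_Icc_right hs.2.le)).intervalIntegrable)
        ((he.mono Ioo_subset_Icc_self).stronglyMeasurableAtFilter isOpen_Ioo s hs) hes
    exact (((hasDerivAt_exp s).mul (hL s hs)).add hprim).congr_deriv (by ring)
  have hanti : AntitoneOn G (Icc 0 t) := by
    refine antitoneOn_of_hasDerivWithinAt_nonpos (f' := fun s => exp s * (L' s + L s + c s))
      (convex_Icc 0 t) hGc (fun s hs => ?_) (fun s hs => ?_) <;> rw [interior_Icc] at hs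
    · exact (hG s hs).hasDerivWithinAt
    · exact mul_nonpos_of_nonneg_of_nonpos (exp_pos s).le (hle s hs)
  have hGt : G t ≤ L 0 := by
    simpa [G] using hanti (left_mem_Icc.mpr ht) (right_mem_Icc.mpr ht) ht
  have hscale : exp (-t) * G t = L t + ∫ s in (0 : ℝ)..t, exp (s - t) * c s := by
    simp only [G, e, mul_add, ← intervalIntegral.integral_const_mul, ← mul_assoc, ← exp_add,
      neg_add_cancel, exp_zero, one_mul, neg_add_eq_sub]
  rw [← hscale]
  exact mul_le_mul_of_nonneg_left hGt (exp_pos _).le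

theorem hnag_flow_exponential_decay_general
    {V : Type*} [NormedAddCommGroup V] [InnerProductSpace ℝ V] [CompleteSpace V]
    (μ : ℝ) (hμ : 0 ≤ μ) (f : V → ℝ) (f' : V → V)
    (hdiff : ∀ z, HasGradientAt f (f' z) z) (hf'cont : Continuous f')
    (hconv : ∀ z w : V, f z - f w - ⟪f' w, z - w⟫ ≥ μ / 2 * ‖z - w‖ ^ 2)
    (xstar : V)
    (β : ℝ → ℝ) (hβcont : Continuous β)
    (x v : ℝ → V) (γ : ℝ → ℝ) (xd vd : ℝ → V) (γd : ℝ → ℝ)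
    (hx : ∀ s, 0 ≤ s → HasDerivAt x (xd s) s)
    (hv : ∀ s, 0 ≤ s → HasDerivAt v (vd s) s)
    (hγ : ∀ s, 0 ≤ s → HasDerivAt γ (γd s) s)
    (ode1 : ∀ s, 0 ≤ s → xd s = v s - x s - β s • f' (x s))
    (ode2 : ∀ s, 0 ≤ s → γ s • vd s = μ • (x s - v s) - f' (x s))
    (ode3 : ∀ s, 0 ≤ s → γd s = μ - γ s)
    (t : ℝ) (ht : 0 ≤ t) :
    (f (x t) - f xstar + γ t / 2 * ‖v t - xstar‖ ^ 2)
        + ∫ s in (0 : ℝ)..t, Real.exp (s - t) * (β s * ‖f' (x s)‖ ^ 2)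
      ≤ Real.exp (-t) * (f (x 0) - f xstar + γ 0 / 2 * ‖v 0 - xstar‖ ^ 2) := by
  have hL : ∀ s, 0 ≤ s → HasDerivAt (fun u => f (x u) - f xstar + γ u / 2 * ‖v u - xstar‖ ^ 2)
      (⟪f' (x s), xd s⟫ + (γd s / 2 * ‖v s - xstar‖ ^ 2 + γ s * ⟪v s - xstar, vd s⟫)) s :=
    fun s hs => hasDerivAt_hnagLyapunov xstar (hdiff _) (hx s hs) (hv s hs) (hγ s hs)
  have hxc : ContinuousOn x (Icc 0 t) := fun s hs => (hx s hs.1).continuousAt.continuousWithinAt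
  refine add_integral_exp_sub_mul_le_exp_neg_mul ht
    (fun s hs => (hL s hs.1).continuousAt.continuousWithinAt) (fun s hs => hL s hs.1.le)
    (hβcont.continuousOn.mul ((hf'cont.comp_continuousOn hxc).norm.pow 2)) (fun s hs => ?_)
  exact hnagLyapunov_deriv_add_le hμ (hconv xstar (x s)) (ode1 s hs.1.le) (ode2 s hs.1.le)
    (ode3 s hs.1.le)

/-- Minimizing property of the continuous H-NAG flow: along a solution of the
H-NAG system, `L(t) + ∫₀ᵗ e^{s-t} β(s) ‖∇f(x(s))‖² ds ≤ e^{-t} L(0)`. -/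
theorem hnag_flow_exponential_decay
    {V : Type*} [NormedAddCommGroup V] [InnerProductSpace ℝ V] [CompleteSpace V]
    (μ : ℝ) (hμ : 0 ≤ μ) (f : V → ℝ) (f' : V → V)
    (hdiff : ∀ z, HasGradientAt f (f' z) z) (hf'cont : Continuous f')
    (hconv : ∀ z w : V, f z - f w - ⟪f' w, z - w⟫ ≥ μ / 2 * ‖z - w‖ ^ 2)
    (xstar : V) (hmin : ∀ z, f xstar ≤ f z)
    (β : ℝ → ℝ) (hβcont : Continuous β) (hβ : ∀ s, 0 ≤ s → 0 ≤ β s)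
    (x v : ℝ → V) (γ : ℝ → ℝ) (xd vd : ℝ → V) (γd : ℝ → ℝ)
    (hx : ∀ s, 0 ≤ s → HasDerivAt x (xd s) s) (hxd : ContinuousOn xd (Set.Ici 0))
    (hv : ∀ s, 0 ≤ s → HasDerivAt v (vd s) s) (hvd : ContinuousOn vd (Set.Ici 0))
    (hγ : ∀ s, 0 ≤ s → HasDerivAt γ (γd s) s) (hγd : ContinuousOn γd (Set.Ici 0))
    (hγpos : ∀ s, 0 ≤ s → 0 < γ s)
    (ode1 : ∀ s, 0 ≤ s → xd s = v s - x s - β s • f' (x s))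
    (ode2 : ∀ s, 0 ≤ s → γ s • vd s = μ • (x s - v s) - f' (x s))
    (ode3 : ∀ s, 0 ≤ s → γd s = μ - γ s)
    (t : ℝ) (ht : 0 ≤ t) :
    (f (x t) - f xstar + γ t / 2 * ‖v t - xstar‖ ^ 2)
        + ∫ s in (0 : ℝ)..t, Real.exp (s - t) * (β s * ‖f' (x s)‖ ^ 2)
      ≤ Real.exp (-t) * (f (x 0) - f xstar + γ 0 / 2 * ‖v 0 - xstar‖ ^ 2) :=
  hnag_flow_exponential_decay_general μ hμ f f' hdiff hf'cont hconv xstar β hβcont x v γ xd vd γd hx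
    hv hγ ode1 ode2 ode3 t ht
end

section
/- Let μ ≥ 0 and let f : V → ℝ be differentiable and μ-convex with global minimizer x*. Let α > 0, γ > 0, β > 0 with βγ = α, and suppose x⁺, v⁺ ∈ V and γ⁺ ∈ ℝ are obtained from x, v ∈ V and γ by one step of the semi-implicit scheme: (x⁺ - x)/α = v - x⁺ - β∇f(x⁺), (v⁺ - v)/α = (μ/γ)(x⁺ - v⁺) - (1/γ)∇f(x⁺), (γ⁺ - γ)/α = μ - γ⁺. Then L(x⁺, v⁺, γ⁺) - L(x, v, γ) ≤ -α·L(x⁺, v⁺, γ⁺) - (αβ/2)‖∇f(x⁺)‖². -/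
open scoped RealInnerProductSpace

set_option maxHeartbeats 1000000

/-- One step of the semi-implicit (proximal) scheme for the H-NAG flow, with
`βγ = α`, contracts the Lyapunov function:
`L(x⁺,v⁺,γ⁺) - L(x,v,γ) ≤ -α L(x⁺,v⁺,γ⁺) - (αβ/2)‖∇f(x⁺)‖²`. -/
theorem semi_implicit_one_step_decay
    {V : Type*} [NormedAddCommGroup V] [InnerProductSpace ℝ V] [CompleteSpace V]
    (μ : ℝ) (hμ : 0 ≤ μ) (f : V → ℝ) (f' : V → V)
    (hdiff : ∀ z, HasGradientAt f (f' z) z)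
    (hconv : ∀ z w : V, f z - f w - ⟪f' w, z - w⟫ ≥ μ / 2 * ‖z - w‖ ^ 2)
    (xstar : V) (hmin : ∀ z, f xstar ≤ f z)
    (α β γ γp : ℝ) (hα : 0 < α) (hγ : 0 < γ) (hβ : 0 < β) (hβγ : β * γ = α)
    (x v xp vp : V)
    (h1 : α⁻¹ • (xp - x) = v - xp - β • f' xp)
    (h2 : α⁻¹ • (vp - v) = (μ / γ) • (xp - vp) - (1 / γ) • f' xp)
    (h3 : (γp - γ) / α = μ - γp) :
    (f xp - f xstar + γp / 2 * ‖vp - xstar‖ ^ 2)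
        - (f x - f xstar + γ / 2 * ‖v - xstar‖ ^ 2)
      ≤ -(α * (f xp - f xstar + γp / 2 * ‖vp - xstar‖ ^ 2))
        - α * β / 2 * ‖f' xp‖ ^ 2 := by
  set g : V := f' xp with hg
  have hα' : (α : ℝ) ≠ 0 := hα.ne'
  have hγ' : (γ : ℝ) ≠ 0 := hγ.ne'
  -- scaled step equations (denominator-free)
  have h1' : xp - x = α • (v - xp) - (α * β) • g := by
    have := congrArg (fun z : V => α • z) h1
    simp only [smul_sub, smul_smul, mul_inv_cancel₀ hα', one_smul] at this
    rw [smul_sub]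
    exact this
  have h2' : vp - v = (β * μ) • (xp - vp) - β • g := by
    have hc1 : α * (μ / γ) = β * μ := by
      field_simp
      linear_combination -μ * hβγ
    have hc2 : α * (1 / γ) = β := by
      field_simp
      linear_combination -hβγ
    have := congrArg (fun z : V => α • z) h2
    simp only [smul_sub, smul_smul, mul_inv_cancel₀ hα', one_smul] at this
    rw [smul_sub, ← hc1, ← hc2]
    exact this
  have e5 : γp + α * γp = γ + α * μ := by
    field_simp at h3
    linarith
  -- scalar identities
  have e1 : ⟪g, xp - x⟫ = α * ⟪g, v - xp⟫ - α * β * ‖g‖ ^ 2 := by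
    rw [h1', inner_sub_right, real_inner_smul_right, real_inner_smul_right,
      real_inner_self_eq_norm_sq]
  have e2 : ⟪g, vp - xstar⟫ - ⟪g, xp - xstar⟫ - ⟪g, v - xp⟫
      = β * μ * ⟪g, xp - vp⟫ - β * ‖g‖ ^ 2 := by
    have hv : vp - v = (vp - xstar) - (xp - xstar) - (v - xp) := by abel
    have ha := congrArg (fun z : V => ⟪g, z⟫) hv
    have hb := congrArg (fun z : V => ⟪g, z⟫) h2'
    simp only [inner_sub_right, real_inner_smul_right, real_inner_self_eq_norm_sq]
      at ha hb ⊢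
    linarith
  have e3 : ‖v - xstar‖ ^ 2
      = ‖vp - xstar‖ ^ 2
        - 2 * (β * μ * ⟪xp - vp, vp - xstar⟫ - β * ⟪g, vp - xstar⟫)
        + (β ^ 2 * μ ^ 2 * ‖xp - vp‖ ^ 2 - 2 * β ^ 2 * μ * ⟪g, xp - vp⟫
            + β ^ 2 * ‖g‖ ^ 2) := by
    have hv : v - xstar = (vp - xstar) - (vp - v) := by abel
    rw [hv, norm_sub_sq_real, h2']
    have hip : ⟪vp - xstar, (β * μ) • (xp - vp) - β • g⟫
        = β * μ * ⟪xp - vp, vp - xstar⟫ - β * ⟪g, vp - xstar⟫ := by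
      rw [inner_sub_right, real_inner_smul_right, real_inner_smul_right,
        real_inner_comm (vp - xstar) (xp - vp), real_inner_comm (vp - xstar) g]
    have hnn : ‖(β * μ) • (xp - vp) - β • g‖ ^ 2
        = β ^ 2 * μ ^ 2 * ‖xp - vp‖ ^ 2 - 2 * β ^ 2 * μ * ⟪g, xp - vp⟫
            + β ^ 2 * ‖g‖ ^ 2 := by
      rw [norm_sub_sq_real, real_inner_smul_left, real_inner_smul_right,
        real_inner_comm (xp - vp) g, norm_smul, norm_smul]
      simp only [Real.norm_eq_abs, mul_pow, sq_abs]
      ring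
    rw [hip, hnn]
  have e4 : ‖xp - xstar‖ ^ 2
      = ‖xp - vp‖ ^ 2 + 2 * ⟪xp - vp, vp - xstar⟫ + ‖vp - xstar‖ ^ 2 := by
    have hv : xp - xstar = (xp - vp) + (vp - xstar) := by abel
    rw [hv, norm_add_sq_real]
  -- key exact identity
  have key : ⟪g, xp - x⟫ + α * ⟪g, xp - xstar⟫ - α * μ / 2 * ‖xp - xstar‖ ^ 2
        + (γp + α * γp) / 2 * ‖vp - xstar‖ ^ 2 - γ / 2 * ‖v - xstar‖ ^ 2
        + α * β / 2 * ‖g‖ ^ 2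
      = -(α * μ / 2 * ‖xp - vp‖ ^ 2) - α * β * μ ^ 2 / 2 * ‖xp - vp‖ ^ 2 := by
    linear_combination e1 - α * e2 - (γ / 2) * e3 - (α * μ / 2) * e4
      + (‖vp - xstar‖ ^ 2 / 2) * e5
      + (μ * ⟪xp - vp, vp - xstar⟫ - ⟪g, vp - xstar⟫ + β * μ * ⟪g, xp - vp⟫
          - β / 2 * ‖g‖ ^ 2 - β * μ ^ 2 / 2 * ‖xp - vp‖ ^ 2) * hβγ
  -- convexity bounds
  have hA : f xp - f x ≤ ⟪g, xp - x⟫ - μ / 2 * ‖xp - x‖ ^ 2 := by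
    have h := hconv x xp
    rw [show x - xp = -(xp - x) by abel, inner_neg_right, norm_neg] at h
    linarith
  have hB : f xp - f xstar ≤ ⟪g, xp - xstar⟫ - μ / 2 * ‖xp - xstar‖ ^ 2 := by
    have h := hconv xstar xp
    rw [show xstar - xp = -(xp - xstar) by abel, inner_neg_right, norm_neg] at h
    linarith
  have hBα : α * (f xp - f xstar)
      ≤ α * (⟪g, xp - xstar⟫ - μ / 2 * ‖xp - xstar‖ ^ 2) :=
    mul_le_mul_of_nonneg_left hB hα.le
  have P1 : 0 ≤ μ * ‖xp - x‖ ^ 2 := mul_nonneg hμ (by positivity)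
  have P2 : 0 ≤ α * μ * ‖xp - vp‖ ^ 2 :=
    mul_nonneg (mul_nonneg hα.le hμ) (by positivity)
  have P3 : 0 ≤ α * β * μ ^ 2 * ‖xp - vp‖ ^ 2 := by positivity
  nlinarith [key, hA, hBα, P1, P2, P3]
end

section
/- Let μ ≥ 0 and let f : V → ℝ be differentiable and μ-convex with global minimizer x*. Let γ₀ > 0, x₀, v₀ ∈ V, and let (α_k) be positive step sizes with β_k = α_k/γ_k, and let the sequences (x_k, v_k, γ_k) be generated by the semi-implicit scheme: (x_{k+1} - x_k)/α_k = v_k - x_{k+1} - β_k∇f(x_{k+1}), (v_{k+1} - v_k)/α_k = (μ/γ_k)(x_{k+1} - v_{k+1}) - (1/γ_k)∇f(x_{k+1}), (γ_{k+1} - γ_k)/α_k = μ - γ_{k+1}. Define λ₀ = 1, λ_k = ∏_{i=0}^{k-1} 1/(1+α_i), L_k = f(x_k) - f(x*) + (γ_k/2)‖v_k - x*‖², R₀ = 0, R_k = (λ_k/2)·∑_{i=0}^{k-1} (α_iβ_i/λ_i)‖∇f(x_{i+1})‖², and E_k = L_k + R_k. Then for every k ≥ 0, E_{k+1} ≤ E_k/(1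 + α_k). -/
open scoped RealInnerProductSpace

lemma key_step {V : Type*} [NormedAddCommGroup V] [InnerProductSpace ℝ V]
    (μ a b γ0 γ1 : ℝ) (hμ : 0 ≤ μ) (ha : 0 < a) (hγ0 : 0 < γ0)
    (hb : b = a / γ0)
    (f : V → ℝ) (g X0 X V0 Vp s : V)
    (hc1 : f X0 - f X - ⟪g, X0 - X⟫ ≥ μ / 2 * ‖X0 - X‖ ^ 2)
    (hc2 : f s - f X - ⟪g, s - X⟫ ≥ μ / 2 * ‖s - X‖ ^ 2)
    (E1 : X - X0 = a • (V0 - X - b • g))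
    (E2 : Vp - V0 = a • ((μ / γ0) • (X - Vp) - (1 / γ0) • g))
    (E3 : γ1 - γ0 = a * (μ - γ1)) :
    (1 + a) * (f X - f s + γ1 / 2 * ‖Vp - s‖ ^ 2) + a * b / 2 * ‖g‖ ^ 2
      ≤ f X0 - f s + γ0 / 2 * ‖V0 - s‖ ^ 2 := by
  have hγ0' : γ0 ≠ 0 := hγ0.ne'
  have F1 : f X - f X0 ≤ a * ⟪g, V0 - X⟫ - a * b * ‖g‖ ^ 2 := by
    have hstep : f X - f X0 ≤ ⟪g, X - X0⟫ := by
      have hn : (0:ℝ) ≤ μ / 2 * ‖X0 - X‖ ^ 2 := by positivity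
      have he : ⟪g, X0 - X⟫ = -⟪g, X - X0⟫ := by
        rw [show X0 - X = -(X - X0) by abel, inner_neg_right]
      linarith [hc1]
    have hcomp : ⟪g, X - X0⟫ = a * ⟪g, V0 - X⟫ - a * b * ‖g‖ ^ 2 := by
      rw [E1, real_inner_smul_right, inner_sub_right, real_inner_smul_right,
        real_inner_self_eq_norm_sq]
      ring
    linarith
  have F2 : a * (f X - f s) ≤ a * (⟪g, X - s⟫ - μ / 2 * ‖X - s‖ ^ 2) := by
    have h1 : f X - f s ≤ ⟪g, X - s⟫ - μ / 2 * ‖X - s‖ ^ 2 := by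
      have e1 : ⟪g, s - X⟫ = -⟪g, X - s⟫ := by
        rw [show s - X = -(X - s) by abel, inner_neg_right]
      have e2 : ‖s - X‖ = ‖X - s‖ := norm_sub_rev _ _
      rw [e2] at hc2
      linarith [hc2]
    exact mul_le_mul_of_nonneg_left h1 ha.le
  have F3 : γ0 * ⟪Vp - s, Vp - V0⟫
      = a * μ * ⟪Vp - s, X - Vp⟫ - a * ⟪Vp - s, g⟫ := by
    have h1 : ⟪Vp - s, Vp - V0⟫
        = a * ((μ / γ0) * ⟪Vp - s, X - Vp⟫ - (1 / γ0) * ⟪Vp - s, g⟫) := by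
      rw [E2, real_inner_smul_right, inner_sub_right, real_inner_smul_right,
        real_inner_smul_right]
    rw [h1]; field_simp
  have F4 : γ0 * ‖V0 - s‖ ^ 2
      = γ0 * ‖Vp - s‖ ^ 2 - 2 * (γ0 * ⟪Vp - s, Vp - V0⟫) + γ0 * ‖Vp - V0‖ ^ 2 := by
    have h1 := norm_sub_sq_real (Vp - s) (Vp - V0)
    rw [show Vp - s - (Vp - V0) = V0 - s by abel] at h1
    linear_combination γ0 * h1
  have Fmu : a * μ * (‖Vp - s‖ ^ 2 + 2 * ⟪Vp - s, X - Vp⟫ - ‖X - s‖ ^ 2) ≤ 0 := by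
    have h1 := norm_sub_sq_real (X - s) (Vp - s)
    rw [show X - s - (Vp - s) = X - Vp by abel] at h1
    have h2 : ⟪Vp - s, X - Vp⟫ = ⟪X - s, Vp - s⟫ - ‖Vp - s‖ ^ 2 := by
      rw [show X - Vp = (X - s) - (Vp - s) by abel, inner_sub_right,
        real_inner_comm (Vp - s) (X - s), real_inner_self_eq_norm_sq]
    have h3 : ‖Vp - s‖ ^ 2 + 2 * ⟪Vp - s, X - Vp⟫ - ‖X - s‖ ^ 2 = -‖X - Vp‖ ^ 2 := by
      linarith [h1, h2]
    rw [h3]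
    nlinarith [mul_nonneg (mul_nonneg ha.le hμ) (sq_nonneg ‖X - Vp‖)]
  have F6 : a * ⟪g, V0 - Vp⟫ ≤ a * b / 2 * ‖g‖ ^ 2 + γ0 / 2 * ‖Vp - V0‖ ^ 2 := by
    have h0 : (0:ℝ) ≤ ‖b • g - (V0 - Vp)‖ ^ 2 := sq_nonneg _
    have h1 : ‖b • g - (V0 - Vp)‖ ^ 2
        = b ^ 2 * ‖g‖ ^ 2 - 2 * (b * ⟪g, V0 - Vp⟫) + ‖Vp - V0‖ ^ 2 := by
      rw [norm_sub_sq_real, real_inner_smul_left, norm_smul, Real.norm_eq_abs,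
        mul_pow, sq_abs, show ‖V0 - Vp‖ = ‖Vp - V0‖ from norm_sub_rev _ _]
    have h2 : γ0 / 2 * (b ^ 2 * ‖g‖ ^ 2 - 2 * (b * ⟪g, V0 - Vp⟫) + ‖Vp - V0‖ ^ 2)
        = a * b / 2 * ‖g‖ ^ 2 - a * ⟪g, V0 - Vp⟫ + γ0 / 2 * ‖Vp - V0‖ ^ 2 := by
      rw [hb]; field_simp
    have h3 : (0:ℝ) ≤ γ0 / 2 * (b ^ 2 * ‖g‖ ^ 2 - 2 * (b * ⟪g, V0 - Vp⟫) + ‖Vp - V0‖ ^ 2) :=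
      mul_nonneg (by positivity) (by linarith [h0, h1])
    linarith [h2, h3]
  have F7 : a * ⟪g, V0 - Vp⟫
      = a * ⟪g, V0 - X⟫ + a * ⟪g, X - s⟫ - a * ⟪Vp - s, g⟫ := by
    have h1 : ⟪g, V0 - Vp⟫ = ⟪g, (V0 - X) + (X - s) - (Vp - s)⟫ := by
      rw [show (V0 - X) + (X - s) - (Vp - s) = V0 - Vp by abel]
    rw [h1, inner_sub_right, inner_add_right, real_inner_comm (Vp - s) g]
    ring
  have G1U : γ1 * ‖Vp - s‖ ^ 2 + a * (γ1 * ‖Vp - s‖ ^ 2)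
      = γ0 * ‖Vp - s‖ ^ 2 + a * (μ * ‖Vp - s‖ ^ 2) := by
    linear_combination ‖Vp - s‖ ^ 2 * E3
  linarith [F1, F2, F3, F4, Fmu, F6, F7, G1U]

/-- One-step contraction `E_{k+1} ≤ E_k/(1+α_k)` for the semi-implicit scheme
for the H-NAG flow, with `β_k = α_k/γ_k`, where
`E_k = L_k + R_k`, `L_k = f(x_k) - f(x*) + (γ_k/2)‖v_k - x*‖²` and
`R_k = (λ_k/2)∑_{i<k} (α_iβ_i/λ_i)‖∇f(x_{i+1})‖²`. -/
theorem semi_implicit_energy_contraction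
    {V : Type*} [NormedAddCommGroup V] [InnerProductSpace ℝ V] [CompleteSpace V]
    (μ : ℝ) (hμ : 0 ≤ μ) (f : V → ℝ) (f' : V → V)
    (hdiff : ∀ z, HasGradientAt f (f' z) z)
    (hconv : ∀ z w : V, f z - f w - ⟪f' w, z - w⟫ ≥ μ / 2 * ‖z - w‖ ^ 2)
    (xstar : V) (hmin : ∀ z, f xstar ≤ f z)
    (x v : ℕ → V) (γ α β lam : ℕ → ℝ)
    (hγ0 : 0 < γ 0) (hα : ∀ k, 0 < α k) (hβ : ∀ k, β k = α k / γ k)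
    (h1 : ∀ k, (α k)⁻¹ • (x (k + 1) - x k)
        = v k - x (k + 1) - β k • f' (x (k + 1)))
    (h2 : ∀ k, (α k)⁻¹ • (v (k + 1) - v k)
        = (μ / γ k) • (x (k + 1) - v (k + 1)) - (1 / γ k) • f' (x (k + 1)))
    (h3 : ∀ k, (γ (k + 1) - γ k) / α k = μ - γ (k + 1))
    (hlam : ∀ k, lam k = ∏ i ∈ Finset.range k, (1 + α i)⁻¹)
    (k : ℕ) :
    ((f (x (k + 1)) - f xstar + γ (k + 1) / 2 * ‖v (k + 1) - xstar‖ ^ 2)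
        + lam (k + 1) / 2 * ∑ i ∈ Finset.range (k + 1),
            (α i * β i / lam i) * ‖f' (x (i + 1))‖ ^ 2)
      ≤ ((f (x k) - f xstar + γ k / 2 * ‖v k - xstar‖ ^ 2)
          + lam k / 2 * ∑ i ∈ Finset.range k,
              (α i * β i / lam i) * ‖f' (x (i + 1))‖ ^ 2) / (1 + α k) := by
  -- rearranged recurrence for γ
  have E3 : ∀ n, γ (n + 1) - γ n = α n * (μ - γ (n + 1)) := by
    intro n
    have h := h3 n
    rw [div_eq_iff (hα n).ne'] at h
    linarith [h]
  -- positivity of γ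
  have hγpos : ∀ n, 0 < γ n := by
    intro n
    induction n with
    | zero => exact hγ0
    | succ m ih =>
      have h := E3 m
      have hm := hα m
      nlinarith [mul_nonneg hm.le hμ]
  -- positivity of lam and recurrence
  have hlampos : ∀ n, 0 < lam n := by
    intro n
    rw [hlam]
    exact Finset.prod_pos fun i _ => inv_pos.2 (by linarith [hα i])
  have hlamsucc : lam (k + 1) = lam k * (1 + α k)⁻¹ := by
    rw [hlam, hlam, Finset.prod_range_succ]
  have ha := hα k
  have ha1 : (0:ℝ) < 1 + α k := by linarith
  have hγk := hγpos k
  -- vector forms of the scheme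
  have E1 : x (k + 1) - x k = α k • (v k - x (k + 1) - β k • f' (x (k + 1))) := by
    calc x (k + 1) - x k = α k • ((α k)⁻¹ • (x (k + 1) - x k)) := by
          rw [smul_smul, mul_inv_cancel₀ ha.ne', one_smul]
      _ = _ := by rw [h1 k]
  have E2 : v (k + 1) - v k
      = α k • ((μ / γ k) • (x (k + 1) - v (k + 1)) - (1 / γ k) • f' (x (k + 1))) := by
    calc v (k + 1) - v k = α k • ((α k)⁻¹ • (v (k + 1) - v k)) := by
          rw [smul_smul, mul_inv_cancel₀ ha.ne', one_smul]
      _ = _ := by rw [h2 k]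
  have KEY := key_step μ (α k) (β k) (γ k) (γ (k + 1)) hμ ha hγk (hβ k) f
    (f' (x (k + 1))) (x k) (x (k + 1)) (v k) (v (k + 1)) xstar
    (hconv (x k) (x (k + 1))) (hconv xstar (x (k + 1))) E1 E2 (E3 k)
  rw [Finset.sum_range_succ, le_div_iff₀ ha1]
  have hlamne : lam k ≠ 0 := (hlampos k).ne'
  have hexp : ((f (x (k + 1)) - f xstar + γ (k + 1) / 2 * ‖v (k + 1) - xstar‖ ^ 2)
        + lam (k + 1) / 2 * ((∑ i ∈ Finset.range k,
            (α i * β i / lam i) * ‖f' (x (i + 1))‖ ^ 2)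
          + (α k * β k / lam k) * ‖f' (x (k + 1))‖ ^ 2)) * (1 + α k)
      = (1 + α k) * (f (x (k + 1)) - f xstar + γ (k + 1) / 2 * ‖v (k + 1) - xstar‖ ^ 2)
        + lam k / 2 * (∑ i ∈ Finset.range k,
            (α i * β i / lam i) * ‖f' (x (i + 1))‖ ^ 2)
        + α k * β k / 2 * ‖f' (x (k + 1))‖ ^ 2 := by
    rw [hlamsucc]
    field_simp
    ring
  linarith [KEY, hexp]
end

section
/- Let μ ≥ 0 and let f : V → ℝ be differentiable and μ-convex with global minimizer x*. Let γ₀ > 0, x₀, v₀ ∈ V, let (α_k) be positive step sizes with β_k = α_k/γ_k, and let (x_k, v_k, γ_k) be generated by the semi-implicit scheme: (x_{k+1} - x_k)/α_k = v_k - x_{k+1} - β_k∇f(x_{k+1}), (v_{k+1} - v_k)/α_k = (μ/γ_k)(x_{k+1} - v_{k+1}) - (1/γ_k)∇f(x_{k+1}), (γ_{k+1} - γ_k)/α_k = μ - γ_{k+1}. Define λ₀ = 1, λ_k = ∏_{i=0}^{k-1} 1/(1+α_i) and L_k = f(x_k) - f(x*) + (γ_k/2)‖v_k - x*‖². Then for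 every k ≥ 0, L_k + (λ_k/2)·∑_{i=0}^{k-1} (α_i²/(λ_iγ_i))‖∇f(x_{i+1})‖² ≤ λ_k·L₀. -/
open scoped RealInnerProductSpace

/-!
Along the scheme, the Lyapunov function `L_k = f(x_k) - f(x*) + γ_k/2 ‖v_k - x*‖²` contracts:
`(1 + α_k) L_{k+1} + α_k²/(2γ_k) ‖∇f(x_{k+1})‖² ≤ L_k`. To see this, bound `f(x_k) - f(x_{k+1})` and
`f(x*) - f(x_{k+1})` below by convexity at `x_{k+1}`; the `v`-update writes
`(γ_k + α_k μ)(v_{k+1} - x*)` as the combination `γ_k (v_k - x* - (α_k/γ_k) ∇f(x_{k+1})) + α_k μ (x_{k+1} - x*)`,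
so convexity of `‖·‖²` absorbs the remaining terms. Unrolling the contraction with the weights `λ_k`
gives the bound.
-/

section InnerProductSpace

variable {V : Type*} [NormedAddCommGroup V] [InnerProductSpace ℝ V]

theorem norm_smul_add_smul_sq_le {a b : ℝ} (ha : 0 ≤ a) (hb : 0 ≤ b) (y z : V) :
    ‖a • y + b • z‖ ^ 2 ≤ (a + b) * (a * ‖y‖ ^ 2 + b * ‖z‖ ^ 2) := by
  have hsub := norm_sub_sq_real y z
  rw [norm_add_sq_real, norm_smul, norm_smul, inner_smul_left, inner_smul_right,
    Real.norm_of_nonneg ha, Real.norm_of_nonneg hb]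
  simp only [conj_trivial]
  have hab : 0 ≤ a * b * ‖y - z‖ ^ 2 := by positivity
  rw [hsub] at hab
  linear_combination hab

noncomputable def lyapunov (f : V → ℝ) (xstar x v : V) (γ : ℝ) : ℝ :=
  f x - f xstar + γ / 2 * ‖v - xstar‖ ^ 2

theorem lyapunov_step {μ a γ γ' : ℝ} (hμ : 0 ≤ μ) (ha : 0 < a) (hγ : 0 < γ)
    {f : V → ℝ} {f' : V → V}
    (hconv : ∀ z w : V, f z - f w - ⟪f' w, z - w⟫ ≥ μ / 2 * ‖z - w‖ ^ 2)
    {xstar x x' v v' : V}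
    (hx : a⁻¹ • (x' - x) = v - x' - (a / γ) • f' x')
    (hv : a⁻¹ • (v' - v) = (μ / γ) • (x' - v') - (1 / γ) • f' x')
    (hγ' : γ' * (1 + a) = γ + a * μ) :
    (1 + a) * lyapunov f xstar x' v' γ' + a ^ 2 / (2 * γ) * ‖f' x'‖ ^ 2
      ≤ lyapunov f xstar x v γ := by
  set g := f' x'
  have hs : 0 < γ + a * μ := by positivity
  have hx_sub : x - x' = (-a) • (v - x') + (a ^ 2 / γ) • g := by
    have := congrArg (a • ·) hx
    simp only [smul_smul, mul_inv_cancel₀ ha.ne', one_smul] at this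
    rw [← neg_sub x', this]
    module
  have hv_comb : (γ + a * μ) • (v' - xstar)
      = γ • (v - xstar - (a / γ) • g) + (a * μ) • (x' - xstar) := by
    have := congrArg ((a * γ) • ·) hv
    simp only [smul_sub, smul_smul] at this
    field_simp at this
    rw [smul_sub γ, smul_smul, mul_div_cancel₀ _ hγ.ne']
    linear_combination (norm := module) this
  have hinner_step : ⟪g, x - x'⟫ = -a * (⟪g, v - xstar⟫ - ⟪g, x' - xstar⟫) + a ^ 2 / γ * ‖g‖ ^ 2 := by
    rw [hx_sub, inner_add_right, real_inner_smul_right, real_inner_smul_right,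
      real_inner_self_eq_norm_sq, ← inner_sub_right, sub_sub_sub_cancel_right]
  have hinner_star : ⟪g, xstar - x'⟫ = -⟪g, x' - xstar⟫ := by
    rw [← inner_neg_right, neg_sub]
  have hnorm_shift : γ * ‖v - xstar - (a / γ) • g‖ ^ 2
      = γ * ‖v - xstar‖ ^ 2 - 2 * a * ⟪g, v - xstar⟫ + a ^ 2 / γ * ‖g‖ ^ 2 := by
    rw [norm_sub_sq_real, norm_smul, real_inner_smul_right, real_inner_comm,
      Real.norm_of_nonneg (by positivity)]
    field_simp
  have hjensen : (γ + a * μ) * ‖v' - xstar‖ ^ 2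
      ≤ γ * ‖v - xstar - (a / γ) • g‖ ^ 2 + a * μ * ‖x' - xstar‖ ^ 2 := by
    have h := norm_smul_add_smul_sq_le hγ.le (by positivity : 0 ≤ a * μ)
      (v - xstar - (a / γ) • g) (x' - xstar)
    rw [← hv_comb, norm_smul, mul_pow, Real.norm_of_nonneg hs.le, sq] at h
    exact le_of_mul_le_mul_left (by linarith) hs
  have hconv_step := hconv x x'
  have hconv_star := hconv xstar x'
  rw [hinner_step] at hconv_step
  rw [hinner_star, norm_sub_rev xstar] at hconv_star
  rw [hnorm_shift] at hjensen
  have hγW : (1 + a) * γ' * ‖v' - xstar‖ ^ 2 = (γ + a * μ) * ‖v' - xstar‖ ^ 2 := by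
    rw [mul_comm (1 + a), hγ']
  unfold lyapunov
  rw [show a ^ 2 / (2 * γ) = a ^ 2 / γ / 2 by ring]
  -- the strong-convexity term `μ/2 ‖x - x'‖²` is simply dropped
  linarith [mul_le_mul_of_nonneg_left hconv_star ha.le, mul_nonneg hμ (sq_nonneg ‖x - x'‖)]

end InnerProductSpace

theorem add_mul_sum_le_mul_of_contraction {L d α lam : ℕ → ℝ} (hα : ∀ k, 0 < 1 + α k)
    (hlam : ∀ k, lam k = ∏ i ∈ Finset.range k, (1 + α i)⁻¹)
    (hstep : ∀ k, (1 + α k) * L (k + 1) + lam k * d k ≤ L k) (k : ℕ) :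
    L k + lam k * ∑ i ∈ Finset.range k, d i ≤ lam k * L 0 := by
  induction k with
  | zero => simp [hlam]
  | succ k ih =>
    have hlam_succ : lam (k + 1) * (1 + α k) = lam k := by
      rw [hlam, hlam, Finset.prod_range_succ, mul_assoc, inv_mul_cancel₀ (hα k).ne', mul_one]
    refine le_of_mul_le_mul_right ?_ (hα k)
    rw [Finset.sum_range_succ]
    linear_combination ih + hstep k + (∑ i ∈ Finset.range k, d i + d k - L 0) * hlam_succ

theorem pos_of_succ_mul_one_add_eq {γ α : ℕ → ℝ} {μ : ℝ} (hμ : 0 ≤ μ) (hγ0 : 0 < γ 0)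
    (hα : ∀ k, 0 < α k) (hγ_succ : ∀ k, γ (k + 1) * (1 + α k) = γ k + α k * μ) (k : ℕ) :
    0 < γ k := by
  induction k with
  | zero => exact hγ0
  | succ k ih =>
    have hα_pos := hα k
    have : 0 < γ (k + 1) * (1 + α k) := by rw [hγ_succ]; positivity
    exact pos_of_mul_pos_left this (by linarith)

theorem semi_implicit_convergence_general
    {V : Type*} [NormedAddCommGroup V] [InnerProductSpace ℝ V]
    (μ : ℝ) (hμ : 0 ≤ μ) (f : V → ℝ) (f' : V → V)
    (hconv : ∀ z w : V, f z - f w - ⟪f' w, z - w⟫ ≥ μ / 2 * ‖z - w‖ ^ 2)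
    (xstar : V)
    (x v : ℕ → V) (γ α β lam : ℕ → ℝ)
    (hγ0 : 0 < γ 0) (hα : ∀ k, 0 < α k) (hβ : ∀ k, β k = α k / γ k)
    (h1 : ∀ k, (α k)⁻¹ • (x (k + 1) - x k)
        = v k - x (k + 1) - β k • f' (x (k + 1)))
    (h2 : ∀ k, (α k)⁻¹ • (v (k + 1) - v k)
        = (μ / γ k) • (x (k + 1) - v (k + 1)) - (1 / γ k) • f' (x (k + 1)))
    (h3 : ∀ k, (γ (k + 1) - γ k) / α k = μ - γ (k + 1))
    (hlam : ∀ k, lam k = ∏ i ∈ Finset.range k, (1 + α i)⁻¹)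
    (k : ℕ) :
    (f (x k) - f xstar + γ k / 2 * ‖v k - xstar‖ ^ 2)
        + lam k / 2 * ∑ i ∈ Finset.range k,
            ((α i) ^ 2 / (lam i * γ i)) * ‖f' (x (i + 1))‖ ^ 2
      ≤ lam k * (f (x 0) - f xstar + γ 0 / 2 * ‖v 0 - xstar‖ ^ 2) := by
  have hγ_succ (k : ℕ) : γ (k + 1) * (1 + α k) = γ k + α k * μ := by
    have := h3 k
    rw [div_eq_iff (hα k).ne'] at this
    linear_combination this
  have hγ := pos_of_succ_mul_one_add_eq hμ hγ0 hα hγ_succ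
  have hlam_pos (k : ℕ) : 0 < lam k := by
    rw [hlam]
    exact Finset.prod_pos fun i _ => by have := hα i; positivity
  have hstep (k : ℕ) : (1 + α k) * lyapunov f xstar (x (k + 1)) (v (k + 1)) (γ (k + 1))
      + lam k * ((α k) ^ 2 / (lam k * γ k) * ‖f' (x (k + 1))‖ ^ 2 / 2)
      ≤ lyapunov f xstar (x k) (v k) (γ k) := by
    have h := lyapunov_step (xstar := xstar) hμ (hα k) (hγ k) hconv (hβ k ▸ h1 k) (h2 k) (hγ_succ k)
    convert h using 2
    field_simp [(hlam_pos k).ne', (hγ k).ne']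
  have h := add_mul_sum_le_mul_of_contraction
    (L := fun k => lyapunov f xstar (x k) (v k) (γ k))
    (d := fun i => (α i) ^ 2 / (lam i * γ i) * ‖f' (x (i + 1))‖ ^ 2 / 2)
    (fun k => by linarith [hα k]) hlam hstep k
  rw [← Finset.sum_div] at h
  unfold lyapunov at h
  linarith

/-- Convergence of the semi-implicit scheme for the H-NAG flow (with `β_k = α_k/γ_k`):
`L_k + (λ_k/2)∑_{i<k} (α_i²/(λ_iγ_i))‖∇f(x_{i+1})‖² ≤ λ_k L₀`. -/
theorem semi_implicit_convergence
    {V : Type*} [NormedAddCommGroup V] [InnerProductSpace ℝ V] [CompleteSpace V]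
    (μ : ℝ) (hμ : 0 ≤ μ) (f : V → ℝ) (f' : V → V)
    (hdiff : ∀ z, HasGradientAt f (f' z) z)
    (hconv : ∀ z w : V, f z - f w - ⟪f' w, z - w⟫ ≥ μ / 2 * ‖z - w‖ ^ 2)
    (xstar : V) (hmin : ∀ z, f xstar ≤ f z)
    (x v : ℕ → V) (γ α β lam : ℕ → ℝ)
    (hγ0 : 0 < γ 0) (hα : ∀ k, 0 < α k) (hβ : ∀ k, β k = α k / γ k)
    (h1 : ∀ k, (α k)⁻¹ • (x (k + 1) - x k)
        = v k - x (k + 1) - β k • f' (x (k + 1)))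
    (h2 : ∀ k, (α k)⁻¹ • (v (k + 1) - v k)
        = (μ / γ k) • (x (k + 1) - v (k + 1)) - (1 / γ k) • f' (x (k + 1)))
    (h3 : ∀ k, (γ (k + 1) - γ k) / α k = μ - γ (k + 1))
    (hlam : ∀ k, lam k = ∏ i ∈ Finset.range k, (1 + α i)⁻¹)
    (k : ℕ) :
    (f (x k) - f xstar + γ k / 2 * ‖v k - xstar‖ ^ 2)
        + lam k / 2 * ∑ i ∈ Finset.range k,
            ((α i) ^ 2 / (lam i * γ i)) * ‖f' (x (i + 1))‖ ^ 2
      ≤ lam k * (f (x 0) - f xstar + γ 0 / 2 * ‖v 0 - xstar‖ ^ 2) :=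
  semi_implicit_convergence_general μ hμ f f' hconv xstar x v γ α β lam hγ0 hα hβ h1 h2 h3 hlam k
end

section
/- Let μ ≥ 0, L > 0, and let f : V → ℝ be differentiable, μ-convex, with L-Lipschitz gradient and global minimizer x*. Let γ₀ > 0, x₀, v₀ ∈ V, and generate sequences by: α_k = √(γ_k/L), β_k = 1/(Lα_k), (x_{k+1} - x_k)/α_k = v_k - x_{k+1} - β_k∇f(x_k), (v_{k+1} - v_k)/α_k = (μ/γ_k)(x_{k+1} - v_{k+1}) - (1/γ_k)∇f(x_{k+1}), (γ_{k+1} - γ_k)/α_k = μ - γ_{k+1}. Define λ₀ = 1, λ_k = ∏_{i=0}^{k-1} 1/(1+α_i), L_k = f(x_k) - f(x*) + (γ_k/2)‖v_k - x*‖², R₀ = 0, R_k = (λ_k/2)·∑_{i=0}^{k-1} (α_iβ_i/λ_i)‖∇f(x_i)‖², and E_k = L_k + R_k. Then for every k ≥ 0, E_{k+1} ≤ E_k/(1 + α_k). -/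
/-!
Write `E_k = L_k + R_k`. Since `λ_{k+1} (1 + α_k) = λ_k` and `α_k β_k = 1 / L`, the remainder obeys
`(1 + α_k) R_{k+1} = R_k + ‖∇f(x_k)‖² / (2L)`, so it suffices to show
`(1 + α_k) L_{k+1} + ‖∇f(x_k)‖² / (2L) ≤ L_k`. This follows by adding co-coercivity of `∇f`
between `x_k` and `x_{k+1}`, `α_k` times strong convexity between `x_{k+1}` and `x*`, and the
expansion of `γ_{k+1} ‖v_{k+1} - x*‖²` through the `v`- and `γ`-updates; because `α_k² = γ_k / L`,
what is left over is `-‖γ_k (v_{k+1} - v_k) + α_k ∇f(x_{k+1})‖² / (2γ_k) ≤ 0`.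
-/

open scoped RealInnerProductSpace

section

variable {V : Type*} [NormedAddCommGroup V] [InnerProductSpace ℝ V]

theorem inner_add_sq_norm_nonneg {γ : ℝ} (hγ : 0 < γ) (α : ℝ) (g d : V) :
    0 ≤ γ / 2 * ‖d‖ ^ 2 + α * ⟪g, d⟫ + α ^ 2 / (2 * γ) * ‖g‖ ^ 2 := by
  have hsq : γ / 2 * ‖d‖ ^ 2 + α * ⟪g, d⟫ + α ^ 2 / (2 * γ) * ‖g‖ ^ 2
      = ‖γ • d + α • g‖ ^ 2 / (2 * γ) := by
    rw [norm_add_sq_real, norm_smul, norm_smul, real_inner_smul_left, real_inner_smul_right,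
      real_inner_comm, Real.norm_eq_abs, Real.norm_eq_abs, mul_pow, mul_pow, sq_abs, sq_abs]
    field_simp
  rw [hsq]
  positivity

-- The change of `γ/2 ‖v - x*‖²` along the `v`-update of the scheme, where `a = αμ`.
theorem sq_norm_sub_of_smul_sub_eq {γ a α : ℝ} {x' v v' g' : V}
    (hv : γ • (v' - v) = a • (x' - v') - α • g') (xs : V) :
    (γ + a) / 2 * ‖v' - xs‖ ^ 2 - γ / 2 * ‖v - xs‖ ^ 2
      = a / 2 * ‖x' - xs‖ ^ 2 - a / 2 * ‖x' - v'‖ ^ 2 - α * ⟪g', v' - xs⟫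
        - γ / 2 * ‖v' - v‖ ^ 2 := by
  have hv_xs : ‖v - xs‖ ^ 2 = ‖v' - xs‖ ^ 2 - 2 * ⟪v' - v, v' - xs⟫ + ‖v' - v‖ ^ 2 := by
    rw [real_inner_comm (v' - xs), ← norm_sub_sq_real, sub_sub_sub_cancel_left]
  have hx_xs : ‖x' - xs‖ ^ 2 = ‖x' - v'‖ ^ 2 + 2 * ⟪x' - v', v' - xs⟫ + ‖v' - xs‖ ^ 2 := by
    rw [← norm_add_sq_real, sub_add_sub_cancel]
  have hinner : γ * ⟪v' - v, v' - xs⟫ = a * ⟪x' - v', v' - xs⟫ - α * ⟪g', v' - xs⟫ := by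
    rw [← real_inner_smul_left, hv, inner_sub_left, real_inner_smul_left, real_inner_smul_left]
  linear_combination (-γ / 2) * hv_xs - a / 2 * hx_xs + hinner

variable [CompleteSpace V] {f : V → ℝ} {f' : V → V} {μ L : ℝ}

theorem le_add_inner_add_sq_of_lipschitz_gradient (hdiff : ∀ z, HasGradientAt f (f' z) z)
    (hlip : ∀ z w, ‖f' z - f' w‖ ≤ L * ‖z - w‖) (z u : V) :
    f u ≤ f z + ⟪f' z, u - z⟫ + L / 2 * ‖u - z‖ ^ 2 := by
  set d := u - z
  -- `ψ` is antitone on `[0, 1]` since `ψ' t = ⟪f' (z + t • d) - f' z, d⟫ - L t ‖d‖² ≤ 0`.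
  set ψ : ℝ → ℝ := fun t => f (z + t • d) - t * ⟪f' z, d⟫ - L / 2 * t ^ 2 * ‖d‖ ^ 2
  have hψ' (t : ℝ) : HasDerivAt ψ (⟪f' (z + t • d), d⟫ - ⟪f' z, d⟫ - L * t * ‖d‖ ^ 2) t := by
    have hline : HasDerivAt (fun t : ℝ => z + t • d) d t := by
      simpa using ((hasDerivAt_id t).smul_const d).const_add z
    have hf := (hdiff (z + t • d)).hasFDerivAt.comp_hasDerivAt t hline
    rw [InnerProductSpace.toDual_apply_apply] at hf
    have hlin : HasDerivAt (fun t : ℝ => t * ⟪f' z, d⟫) ⟪f' z, d⟫ t := by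
      simpa using (hasDerivAt_id t).mul_const ⟪f' z, d⟫
    have hquad : HasDerivAt (fun t : ℝ => L / 2 * t ^ 2 * ‖d‖ ^ 2) (L * t * ‖d‖ ^ 2) t :=
      (((hasDerivAt_pow 2 t).const_mul (L / 2)).mul_const (‖d‖ ^ 2)).congr_deriv
        (by push_cast; ring)
    exact (hf.sub hlin).sub hquad
  have hψ'_nonpos (t : ℝ) (ht : 0 < t) :
      ⟪f' (z + t • d), d⟫ - ⟪f' z, d⟫ - L * t * ‖d‖ ^ 2 ≤ 0 := by
    rw [← inner_sub_left]
    calc ⟪f' (z + t • d) - f' z, d⟫ - L * t * ‖d‖ ^ 2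
        ≤ ‖f' (z + t • d) - f' z‖ * ‖d‖ - L * ‖(z + t • d) - z‖ * ‖d‖ := by
          rw [add_sub_cancel_left, norm_smul, Real.norm_of_nonneg ht.le]
          linarith [real_inner_le_norm (f' (z + t • d) - f' z) d]
      _ ≤ 0 := by
          rw [sub_nonpos]
          exact mul_le_mul_of_nonneg_right (hlip _ _) (norm_nonneg d)
  have hanti : AntitoneOn ψ (Set.Icc 0 1) :=
    antitoneOn_of_deriv_nonpos (convex_Icc 0 1)
      (fun t _ => (hψ' t).continuousAt.continuousWithinAt)
      (fun t _ => (hψ' t).differentiableAt.differentiableWithinAt)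
      (fun t ht => by
        rw [interior_Icc] at ht
        exact (hψ' t).deriv ▸ hψ'_nonpos t ht.1)
  have h01 := hanti (Set.left_mem_Icc.mpr zero_le_one) (Set.right_mem_Icc.mpr zero_le_one)
    zero_le_one
  simp only [ψ, d, one_smul, zero_smul, add_zero, add_sub_cancel] at h01
  linarith

theorem sq_norm_sub_gradient_le_of_lipschitz_gradient (hL : 0 < L)
    (hdiff : ∀ z, HasGradientAt f (f' z) z)
    (hconv : ∀ z w, 0 ≤ f z - f w - ⟪f' w, z - w⟫)
    (hlip : ∀ z w, ‖f' z - f' w‖ ≤ L * ‖z - w‖) (z w : V) :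
    1 / (2 * L) * ‖f' z - f' w‖ ^ 2 ≤ f z - f w - ⟪f' w, z - w⟫ := by
  -- Compare `f` at `u = z - G / L` with the tangent planes at `z` (descent lemma) and at `w`.
  set G := f' z - f' w
  set u := z - (1 / L) • G
  have hdesc := le_add_inner_add_sq_of_lipschitz_gradient hdiff hlip z u
  have hcvx := hconv u w
  have hu_z : u - z = -((1 / L) • G) := by simp [u]
  have hu_w : u - w = (z - w) - (1 / L) • G := by simp only [u]; abel
  have hG : ⟪f' z, G⟫ - ⟪f' w, G⟫ = ‖G‖ ^ 2 := by
    rw [← inner_sub_left, real_inner_self_eq_norm_sq]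
  rw [hu_z, inner_neg_right, real_inner_smul_right, norm_neg, norm_smul,
    Real.norm_of_nonneg (by positivity)] at hdesc
  rw [hu_w, inner_sub_right, real_inner_smul_right] at hcvx
  have hsq : L / 2 * (1 / L * ‖G‖) ^ 2 = 1 / (2 * L) * ‖G‖ ^ 2 := by field_simp
  have hlin : 1 / L * ⟪f' z, G⟫ - 1 / L * ⟪f' w, G⟫ = 2 * (1 / (2 * L) * ‖G‖ ^ 2) := by
    rw [← mul_sub, hG]; field_simp
  linarith

theorem hnag_lyapunov_step (hμ : 0 ≤ μ) (hL : 0 < L) (hdiff : ∀ z, HasGradientAt f (f' z) z)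
    (hconv : ∀ z w : V, f z - f w - ⟪f' w, z - w⟫ ≥ μ / 2 * ‖z - w‖ ^ 2)
    (hlip : ∀ z w : V, ‖f' z - f' w‖ ≤ L * ‖z - w‖)
    {x x' v v' : V} {γ γ' α : ℝ} (hγ : 0 < γ) (hα : 0 ≤ α) (hα2 : α ^ 2 = γ / L)
    (hx : x' - x = α • (v - x') - (1 / L) • f' x)
    (hv : γ • (v' - v) = (α * μ) • (x' - v') - α • f' x')
    (hγ' : (1 + α) * γ' = γ + α * μ) (xs : V) :
    (1 + α) * (f x' - f xs + γ' / 2 * ‖v' - xs‖ ^ 2) + 1 / (2 * L) * ‖f' x‖ ^ 2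
      ≤ f x - f xs + γ / 2 * ‖v - xs‖ ^ 2 := by
  have hcoco := sq_norm_sub_gradient_le_of_lipschitz_gradient hL hdiff
    (fun z w => le_trans (by positivity) (hconv z w)) hlip x x'
  have hopt := mul_le_mul_of_nonneg_left (hconv xs x') hα
  rw [← neg_sub x' xs, inner_neg_right, norm_neg] at hopt
  rw [← neg_sub x' x, inner_neg_right, norm_sub_sq_real, real_inner_comm] at hcoco
  have hquad := sq_norm_sub_of_smul_sub_eq hv xs
  have hγN : (1 + α) * γ' / 2 * ‖v' - xs‖ ^ 2 = (γ + α * μ) / 2 * ‖v' - xs‖ ^ 2 := by rw [hγ']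
  have hyoung := inner_add_sq_norm_nonneg hγ α (f' x') (v' - v)
  rw [show α ^ 2 / (2 * γ) = 1 / (2 * L) by rw [hα2]; field_simp] at hyoung
  have hgrad : ⟪f' x', x' - x⟫ + α * ⟪f' x', x' - xs⟫ - α * ⟪f' x', v' - xs⟫
      = -(1 / L) * ⟪f' x', f' x⟫ - α * ⟪f' x', v' - v⟫ := by
    have : (x' - x) + α • (x' - xs) - α • (v' - xs) = -(1 / L) • f' x - α • (v' - v) := by
      rw [hx]; module
    simpa only [inner_add_right, inner_sub_right, real_inner_smul_right] using
      congrArg (⟪f' x', ·⟫) this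
  have hxv : 0 ≤ α * μ / 2 * ‖x' - v'‖ ^ 2 := by positivity
  linear_combination hcoco + hopt + hyoung + hxv + hgrad + hquad + hγN

theorem one_add_mul_eq_of_div_eq {γ γ' α : ℝ} (hα : α ≠ 0) (h : (γ' - γ) / α = μ - γ') :
    (1 + α) * γ' = γ + α * μ := by
  rw [div_eq_iff hα] at h
  linarith

theorem hnag_gamma_pos {γ α : ℕ → ℝ} (hμ : 0 ≤ μ) (hL : 0 < L) (hγ0 : 0 < γ 0)
    (hα : ∀ k, α k = Real.sqrt (γ k / L)) (hγ : ∀ k, (γ (k + 1) - γ k) / α k = μ - γ (k + 1))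
    (n : ℕ) : 0 < γ n := by
  induction n with
  | zero => exact hγ0
  | succ n ih =>
    have hαn : 0 < α n := hα n ▸ Real.sqrt_pos.2 (div_pos ih hL)
    have hγn := one_add_mul_eq_of_div_eq hαn.ne' (hγ n)
    nlinarith [mul_nonneg hαn.le hμ]

end

theorem explicit_hnag_energy_contraction_general
    {V : Type*} [NormedAddCommGroup V] [InnerProductSpace ℝ V] [CompleteSpace V]
    (μ L : ℝ) (hμ : 0 ≤ μ) (hL : 0 < L) (f : V → ℝ) (f' : V → V)
    (hdiff : ∀ z, HasGradientAt f (f' z) z)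
    (hconv : ∀ z w : V, f z - f w - ⟪f' w, z - w⟫ ≥ μ / 2 * ‖z - w‖ ^ 2)
    (hlip : ∀ z w : V, ‖f' z - f' w‖ ≤ L * ‖z - w‖)
    (xstar : V)
    (x v : ℕ → V) (γ α β lam : ℕ → ℝ) (hγ0 : 0 < γ 0)
    (hαdef : ∀ k, α k = Real.sqrt (γ k / L)) (hβ : ∀ k, β k = 1 / (L * α k))
    (h1 : ∀ k, (α k)⁻¹ • (x (k + 1) - x k) = v k - x (k + 1) - β k • f' (x k))
    (h2 : ∀ k, (α k)⁻¹ • (v (k + 1) - v k)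
        = (μ / γ k) • (x (k + 1) - v (k + 1)) - (1 / γ k) • f' (x (k + 1)))
    (h3 : ∀ k, (γ (k + 1) - γ k) / α k = μ - γ (k + 1))
    (hlam : ∀ k, lam k = ∏ i ∈ Finset.range k, (1 + α i)⁻¹)
    (k : ℕ) :
    ((f (x (k + 1)) - f xstar + γ (k + 1) / 2 * ‖v (k + 1) - xstar‖ ^ 2)
        + lam (k + 1) / 2 * ∑ i ∈ Finset.range (k + 1),
            (α i * β i / lam i) * ‖f' (x i)‖ ^ 2)
      ≤ ((f (x k) - f xstar + γ k / 2 * ‖v k - xstar‖ ^ 2)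
          + lam k / 2 * ∑ i ∈ Finset.range k,
              (α i * β i / lam i) * ‖f' (x i)‖ ^ 2) / (1 + α k) := by
  have hγ := hnag_gamma_pos hμ hL hγ0 hαdef h3
  have hα (n : ℕ) : 0 < α n := hαdef n ▸ Real.sqrt_pos.2 (div_pos (hγ n) hL)
  have hα2 : α k ^ 2 = γ k / L := by rw [hαdef, Real.sq_sqrt (div_pos (hγ k) hL).le]
  have hαβ : α k * β k = 1 / L := by rw [hβ]; field_simp [(hα k).ne']
  have hx : x (k + 1) - x k = α k • (v k - x (k + 1)) - (1 / L) • f' (x k) := by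
    rw [← smul_inv_smul₀ (hα k).ne' (x (k + 1) - x k), h1, smul_sub, smul_smul, hαβ]
  have hv : γ k • (v (k + 1) - v k)
      = (α k * μ) • (x (k + 1) - v (k + 1)) - α k • f' (x (k + 1)) := by
    rw [← smul_inv_smul₀ (hα k).ne' (v (k + 1) - v k), h2]
    match_scalars <;> field_simp [(hγ k).ne']
  have hstep := hnag_lyapunov_step hμ hL hdiff hconv hlip (hγ k) (hα k).le hα2 hx hv
    (one_add_mul_eq_of_div_eq (hα k).ne' (h3 k)) xstar
  have hlam_pos : 0 < lam k := hlam k ▸ Finset.prod_pos fun i _ => inv_pos.2 (by linarith [hα i])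
  have hlam_succ : lam (k + 1) = lam k * (1 + α k)⁻¹ := by rw [hlam, hlam, Finset.prod_range_succ]
  rw [le_div_iff₀ (by linarith [hα k]), Finset.sum_range_succ, hlam_succ, hαβ]
  set S := ∑ i ∈ Finset.range k, α i * β i / lam i * ‖f' (x i)‖ ^ 2
  have hR : lam k * (1 + α k)⁻¹ / 2 * (S + 1 / L / lam k * ‖f' (x k)‖ ^ 2) * (1 + α k)
      = lam k / 2 * S + 1 / (2 * L) * ‖f' (x k)‖ ^ 2 := by
    field_simp [hlam_pos.ne', (by linarith [hα k] : 1 + α k ≠ 0)]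
  linear_combination hstep + hR

/-- One-step contraction `E_{k+1} ≤ E_k/(1+α_k)` for the explicit HNAG scheme
(Algorithm 1), with `α_k = √(γ_k/L)`, `β_k = 1/(Lα_k)`, where `E_k = L_k + R_k`,
`L_k = f(x_k) - f(x*) + (γ_k/2)‖v_k - x*‖²` and
`R_k = (λ_k/2)∑_{i<k} (α_iβ_i/λ_i)‖∇f(x_i)‖²`. -/
theorem explicit_hnag_energy_contraction
    {V : Type*} [NormedAddCommGroup V] [InnerProductSpace ℝ V] [CompleteSpace V]
    (μ L : ℝ) (hμ : 0 ≤ μ) (hL : 0 < L) (f : V → ℝ) (f' : V → V)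
    (hdiff : ∀ z, HasGradientAt f (f' z) z)
    (hconv : ∀ z w : V, f z - f w - ⟪f' w, z - w⟫ ≥ μ / 2 * ‖z - w‖ ^ 2)
    (hlip : ∀ z w : V, ‖f' z - f' w‖ ≤ L * ‖z - w‖)
    (xstar : V) (hmin : ∀ z, f xstar ≤ f z)
    (x v : ℕ → V) (γ α β lam : ℕ → ℝ) (hγ0 : 0 < γ 0)
    (hαdef : ∀ k, α k = Real.sqrt (γ k / L)) (hβ : ∀ k, β k = 1 / (L * α k))
    (h1 : ∀ k, (α k)⁻¹ • (x (k + 1) - x k) = v k - x (k + 1) - β k • f' (x k))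
    (h2 : ∀ k, (α k)⁻¹ • (v (k + 1) - v k)
        = (μ / γ k) • (x (k + 1) - v (k + 1)) - (1 / γ k) • f' (x (k + 1)))
    (h3 : ∀ k, (γ (k + 1) - γ k) / α k = μ - γ (k + 1))
    (hlam : ∀ k, lam k = ∏ i ∈ Finset.range k, (1 + α i)⁻¹)
    (k : ℕ) :
    ((f (x (k + 1)) - f xstar + γ (k + 1) / 2 * ‖v (k + 1) - xstar‖ ^ 2)
        + lam (k + 1) / 2 * ∑ i ∈ Finset.range (k + 1),
            (α i * β i / lam i) * ‖f' (x i)‖ ^ 2)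
      ≤ ((f (x k) - f xstar + γ k / 2 * ‖v k - xstar‖ ^ 2)
          + lam k / 2 * ∑ i ∈ Finset.range k,
              (α i * β i / lam i) * ‖f' (x i)‖ ^ 2) / (1 + α k) :=
  explicit_hnag_energy_contraction_general μ L hμ hL f f' hdiff hconv hlip xstar x v γ α β lam hγ0
    hαdef hβ h1 h2 h3 hlam k
end

section
/- Let μ ≥ 0, L > 0, γ₀ > 0, and define sequences by α_k = √(γ_k/L), γ_{k+1} = (γ_k + μα_k)/(1 + α_k), λ₀ = 1 and λ_k = ∏_{i=0}^{k-1} 1/(1+α_i). Then for every k ≥ 0, λ_k ≤ γ_k/γ₀ = Lα_k²/γ₀. -/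
/-- For the explicit HNAG parameter sequences (`α_k = √(γ_k/L)`,
`γ_{k+1} = (γ_k + μα_k)/(1+α_k)`, `λ_k = ∏_{i<k} 1/(1+α_i)`):
`λ_k ≤ γ_k/γ₀ = Lα_k²/γ₀`. -/
theorem lambda_le_gamma_ratio
    (μ L : ℝ) (hμ : 0 ≤ μ) (hL : 0 < L) (γ0 : ℝ) (hγ0 : 0 < γ0)
    (α γ lam : ℕ → ℝ) (hinit : γ 0 = γ0)
    (hαdef : ∀ k, α k = Real.sqrt (γ k / L))
    (hrec : ∀ k, γ (k + 1) = (γ k + μ * α k) / (1 + α k))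
    (hlam : ∀ k, lam k = ∏ i ∈ Finset.range k, (1 + α i)⁻¹)
    (k : ℕ) :
    lam k ≤ γ k / γ0 ∧ γ k / γ0 = L * (α k) ^ 2 / γ0 := by
  have hαnn : ∀ k, 0 ≤ α k := fun k => by rw [hαdef]; exact Real.sqrt_nonneg _
  have h1α : ∀ k, (0:ℝ) < 1 + α k := fun k => by linarith [hαnn k]
  have hγpos : ∀ k, 0 < γ k := by
    intro k
    induction k with
    | zero => rwa [hinit]
    | succ n ih =>
      rw [hrec]
      exact div_pos (add_pos_of_pos_of_nonneg ih (mul_nonneg hμ (hαnn n))) (h1α n)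
  have hαsq : ∀ k, L * (α k) ^ 2 = γ k := by
    intro k
    rw [hαdef, Real.sq_sqrt (div_nonneg (hγpos k).le hL.le)]
    field_simp
  have hle : ∀ k, lam k ≤ γ k / γ0 := by
    intro k
    induction k with
    | zero => simp [hlam, hinit, div_self hγ0.ne']
    | succ n ih =>
      have h2 := h1α n
      have hstep : lam (n + 1) = lam n * (1 + α n)⁻¹ := by
        rw [hlam, hlam, Finset.prod_range_succ]
      rw [hstep, hrec]
      calc lam n * (1 + α n)⁻¹ ≤ (γ n / γ0) * (1 + α n)⁻¹ :=
            mul_le_mul_of_nonneg_right ih (by positivity)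
        _ = γ n / (1 + α n) / γ0 := by ring
        _ ≤ (γ n + μ * α n) / (1 + α n) / γ0 := by
            gcongr
            nlinarith [hαnn n, hμ]
  exact ⟨hle k, by rw [hαsq]⟩
end

section
/- Let μ ≥ 0, L > 0, γ₀ > 0, and define sequences by α_k = √(γ_k/L), γ_{k+1} = (γ_k + μα_k)/(1 + α_k), λ₀ = 1 and λ_k = ∏_{i=0}^{k-1} 1/(1+α_i). Then for every k ≥ 0, λ_k ≤ (1 + √(min{γ₀, μ}/L))^{-k}. -/
/-- Linear bound for the explicit HNAG rate sequence:
`λ_k ≤ (1 + √(min{γ₀,μ}/L))⁻ᵏ`. -/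
theorem lambda_linear_bound
    (μ L : ℝ) (hμ : 0 ≤ μ) (hL : 0 < L) (γ0 : ℝ) (hγ0 : 0 < γ0)
    (α γ lam : ℕ → ℝ) (hinit : γ 0 = γ0)
    (hαdef : ∀ k, α k = Real.sqrt (γ k / L))
    (hrec : ∀ k, γ (k + 1) = (γ k + μ * α k) / (1 + α k))
    (hlam : ∀ k, lam k = ∏ i ∈ Finset.range k, (1 + α i)⁻¹)
    (k : ℕ) :
    lam k ≤ ((1 + Real.sqrt (min γ0 μ / L)) ^ k)⁻¹ := by
  set m := min γ0 μ with hm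
  have hm0 : 0 ≤ m := le_min hγ0.le hμ
  have hα0 : ∀ n, 0 ≤ α n := fun n => (hαdef n) ▸ Real.sqrt_nonneg _
  have key : ∀ n, 0 < γ n ∧ m ≤ γ n := by
    intro n
    induction n with
    | zero => exact ⟨hinit ▸ hγ0, hinit ▸ min_le_left _ _⟩
    | succ n ih =>
      obtain ⟨hpos, hge⟩ := ih
      have hαn := hα0 n
      have hden : (0:ℝ) < 1 + α n := by linarith
      constructor
      · rw [hrec n]
        apply div_pos _ hden
        nlinarith
      · rw [hrec n, le_div_iff₀ hden]
        have : m ≤ μ := min_le_right _ _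
        nlinarith
  have hαge : ∀ n, Real.sqrt (m / L) ≤ α n := by
    intro n
    rw [hαdef n]
    exact Real.sqrt_le_sqrt (by gcongr; exact (key n).2)
  set s := Real.sqrt (m / L) with hs
  have hs0 : 0 ≤ s := Real.sqrt_nonneg _
  rw [hlam k, ← inv_pow]
  calc ∏ i ∈ Finset.range k, (1 + α i)⁻¹ ≤ ∏ _i ∈ Finset.range k, (1 + s)⁻¹ := ?_
    _ = (1 + s)⁻¹ ^ k := by rw [Finset.prod_const, Finset.card_range]
  apply Finset.prod_le_prod
  · intro i _
    exact inv_nonneg.mpr (by linarith [hα0 i])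
  · intro i _
    exact inv_anti₀ (by linarith) (by linarith [hαge i])
end

section
/- Let μ ≥ 0, L > 0, γ₀ > 0, and define sequences by: α_k is the positive root of Lα_k² = γ_k(2 + α_k), γ_{k+1} = (γ_k + μα_k)/(1 + α_k), λ₀ = 1 and λ_k = ∏_{i=0}^{k-1} 1/(1+α_i). Then for every k ≥ 0, λ_k ≤ min{ 4L·(2√L + √(1.5·γ₀)·k)^{-2}, (1 + √(2·min{γ₀, μ}/L))^{-k} }. -/
set_option maxHeartbeats 1600000 in
/-- Optimal rate bound for the extra-gradient HNAG parameter sequences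
(`α_k` the positive root of `Lα² = γ_k(2+α)`,
`γ_{k+1} = (γ_k + μα_k)/(1+α_k)`, `λ_k = ∏_{i<k} 1/(1+α_i)`):
`λ_k ≤ min{ 4L(2√L + √(1.5γ₀)k)⁻², (1 + √(2 min{γ₀,μ}/L))⁻ᵏ }`. -/
theorem extra_gradient_lambda_bound
    (μ L : ℝ) (hμ : 0 ≤ μ) (hL : 0 < L) (γ0 : ℝ) (hγ0 : 0 < γ0)
    (α γ lam : ℕ → ℝ) (hinit : γ 0 = γ0)
    (hαpos : ∀ k, 0 < α k) (hαdef : ∀ k, L * (α k) ^ 2 = γ k * (2 + α k))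
    (hrec : ∀ k, γ (k + 1) = (γ k + μ * α k) / (1 + α k))
    (hlam : ∀ k, lam k = ∏ i ∈ Finset.range k, (1 + α i)⁻¹)
    (k : ℕ) :
    lam k ≤ min (4 * L / (2 * Real.sqrt L + Real.sqrt (1.5 * γ0) * k) ^ 2)
        (((1 + Real.sqrt (2 * min γ0 μ / L)) ^ k)⁻¹) := by
  obtain ⟨c, hc⟩ : ∃ c, c = Real.sqrt (1.5 * γ0) := ⟨_, rfl⟩
  rw [← hc]
  have hc0 : 0 ≤ c := hc ▸ Real.sqrt_nonneg _
  have hc2 : c ^ 2 = 1.5 * γ0 := by rw [hc]; exact Real.sq_sqrt (by positivity)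
  have hsL : 0 < Real.sqrt L := Real.sqrt_pos.mpr hL
  have hsL2 : Real.sqrt L ^ 2 = L := Real.sq_sqrt hL.le
  -- positivity of γ
  have hγpos : ∀ n, 0 < γ n := by
    intro n
    induction n with
    | zero => rw [hinit]; exact hγ0
    | succ m ih =>
      rw [hrec]
      have h1 := hαpos m
      exact div_pos (by nlinarith) (by nlinarith)
  -- positivity of lam
  have hlampos : ∀ n, 0 < lam n := by
    intro n
    rw [hlam]
    exact Finset.prod_pos fun i _ => inv_pos.mpr (by nlinarith [hαpos i])
  have hlamsucc : ∀ n, lam (n + 1) = lam n * (1 + α n)⁻¹ := by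
    intro n
    rw [hlam, hlam, Finset.prod_range_succ]
  -- lower bound γ0 * lam n ≤ γ n
  have hγlam : ∀ n, γ0 * lam n ≤ γ n := by
    intro n
    induction n with
    | zero => rw [hinit, hlam]; simp
    | succ m ih =>
      have h1 : (0:ℝ) < 1 + α m := by nlinarith [hαpos m]
      rw [hrec, hlamsucc]
      rw [le_div_iff₀ h1]
      have hαm := (hαpos m).le
      have : γ0 * (lam m * (1 + α m)⁻¹) * (1 + α m) = γ0 * lam m := by
        field_simp
      rw [this]
      nlinarith
  -- lower bound min γ0 μ ≤ γ n
  have hγmin : ∀ n, min γ0 μ ≤ γ n := by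
    intro n
    induction n with
    | zero => rw [hinit]; exact min_le_left _ _
    | succ m ih =>
      have h1 : (0:ℝ) < 1 + α m := by nlinarith [hαpos m]
      rw [hrec, le_div_iff₀ h1]
      have h2 : min γ0 μ ≤ μ := min_le_right _ _
      nlinarith [hαpos m]
  rw [le_min_iff]
  constructor
  · -- first bound
    have claim : ∀ n : ℕ, Real.sqrt (lam n) * (2 * Real.sqrt L + c * n) ≤ 2 * Real.sqrt L := by
      intro n
      induction n with
      | zero =>
        have : lam 0 = 1 := by rw [hlam]; simp
        rw [this]
        simp
      | succ m ih =>
        obtain ⟨s, hs⟩ : ∃ s, s = Real.sqrt (1 + α m) := ⟨_, rfl⟩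
        have hαm := hαpos m
        have hs1 : 1 ≤ s := by
          have h1 : (1:ℝ) ≤ 1 + α m := by nlinarith
          calc (1:ℝ) = Real.sqrt 1 := by simp
            _ ≤ s := hs ▸ Real.sqrt_le_sqrt h1
        have hs2 : s ^ 2 = 1 + α m := by rw [hs]; exact Real.sq_sqrt (by nlinarith)
        have hls : 0 ≤ lam m := (hlampos m).le
        have heq : Real.sqrt (lam (m + 1)) * s = Real.sqrt (lam m) := by
          rw [hlamsucc, Real.sqrt_mul hls, Real.sqrt_inv, hs]
          have hsp : (0:ℝ) < Real.sqrt (1 + α m) := Real.sqrt_pos.mpr (by nlinarith)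
          field_simp
        -- key inequality: c * sqrt(lam m) ≤ 2 sqrt L (s - 1)
        have hkey : c * Real.sqrt (lam m) ≤ 2 * Real.sqrt L * (s - 1) := by
          have hlhs : (c * Real.sqrt (lam m)) ^ 2 = 1.5 * γ0 * lam m := by
            rw [mul_pow, hc2, Real.sq_sqrt hls]
          have hrhs : (2 * Real.sqrt L * (s - 1)) ^ 2 = 4 * L * (s - 1) ^ 2 := by
            rw [mul_pow, mul_pow, hsL2]; ring
          have hsq : (c * Real.sqrt (lam m)) ^ 2 ≤ (2 * Real.sqrt L * (s - 1)) ^ 2 := by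
            rw [hlhs, hrhs]
            -- 1.5 γ0 lam m ≤ 1.5 γ m, and 1.5 γ m (2 + α) = 1.5 L α², α = s² - 1
            have h1 : 1.5 * γ0 * lam m ≤ 1.5 * γ m := by nlinarith [hγlam m]
            have h2 : 1.5 * γ m * (2 + α m) = 1.5 * L * (α m) ^ 2 := by
              linear_combination (-1.5) * (hαdef m)
            have h3 : (0:ℝ) < 2 + α m := by nlinarith
            have hα : α m = s ^ 2 - 1 := by linarith [hs2]
            -- show 1.5 L (s²-1)² ≤ 4 L (s-1)² (s²+1)
            have h4 : 1.5 * L * (α m) ^ 2 ≤ 4 * L * (s - 1) ^ 2 * (2 + α m) := by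
              rw [hα]
              nlinarith [mul_nonneg (mul_nonneg hL.le (sq_nonneg (s - 1))) (sq_nonneg (5 * s - 3)),
                mul_nonneg hL.le (sq_nonneg (s - 1))]
            have h5 : 1.5 * γ m * (2 + α m) ≤ 4 * L * (s - 1) ^ 2 * (2 + α m) := by
              rw [h2]; exact h4
            have h6 : 1.5 * γ m ≤ 4 * L * (s - 1) ^ 2 := le_of_mul_le_mul_right h5 h3
            linarith
          have hL0 : 0 ≤ c * Real.sqrt (lam m) := by positivity
          have hR0 : 0 ≤ 2 * Real.sqrt L * (s - 1) := by nlinarith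
          calc c * Real.sqrt (lam m) = Real.sqrt ((c * Real.sqrt (lam m)) ^ 2) :=
                (Real.sqrt_sq hL0).symm
            _ ≤ Real.sqrt ((2 * Real.sqrt L * (s - 1)) ^ 2) := Real.sqrt_le_sqrt hsq
            _ = 2 * Real.sqrt L * (s - 1) := Real.sqrt_sq hR0
        -- combine
        have hsp : (0:ℝ) < s := by linarith
        have step : Real.sqrt (lam (m + 1)) * (2 * Real.sqrt L + c * (m + 1 : ℕ)) * s
            ≤ 2 * Real.sqrt L * s := by
          have expand : Real.sqrt (lam (m + 1)) * (2 * Real.sqrt L + c * (m + 1 : ℕ)) * s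
              = Real.sqrt (lam (m + 1)) * s * (2 * Real.sqrt L + c * m)
                + c * (Real.sqrt (lam (m + 1)) * s) := by
            push_cast; ring
          rw [expand, heq]
          nlinarith
        exact le_of_mul_le_mul_right step hsp
    -- conclude from claim
    have hD : (0:ℝ) < 2 * Real.sqrt L + c * k := by positivity
    have h1 := claim k
    have hls : 0 ≤ Real.sqrt (lam k) := Real.sqrt_nonneg _
    have hsq : lam k * (2 * Real.sqrt L + c * k) ^ 2 ≤ 4 * L := by
      have h2 : (Real.sqrt (lam k) * (2 * Real.sqrt L + c * k)) ^ 2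
          ≤ (2 * Real.sqrt L) ^ 2 := by
        apply pow_le_pow_left₀ (by positivity) h1
      rw [mul_pow, Real.sq_sqrt (hlampos k).le] at h2
      rw [mul_pow, hsL2] at h2
      linarith
    rw [le_div_iff₀ (by positivity)]
    exact hsq
  · -- second bound
    obtain ⟨m, hm⟩ : ∃ m, m = min γ0 μ := ⟨_, rfl⟩
    rw [← hm]
    have hm0 : 0 ≤ m := hm ▸ le_min hγ0.le hμ
    obtain ⟨d, hd⟩ : ∃ d, d = Real.sqrt (2 * m / L) := ⟨_, rfl⟩
    rw [← hd]
    have hd0 : 0 ≤ d := hd ▸ Real.sqrt_nonneg _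
    have hdα : ∀ i, d ≤ α i := by
      intro i
      have hαi := hαpos i
      have h1 : 2 * m / L ≤ (α i) ^ 2 := by
        rw [div_le_iff₀ hL]
        have h3 := hαdef i
        have h4 : m ≤ γ i := hm ▸ hγmin i
        nlinarith
      calc d ≤ Real.sqrt ((α i) ^ 2) := hd ▸ Real.sqrt_le_sqrt h1
        _ = α i := by rw [Real.sqrt_sq hαi.le]
    rw [hlam]
    have h1d : (0:ℝ) < 1 + d := by linarith
    calc (∏ i ∈ Finset.range k, (1 + α i)⁻¹)
        ≤ ∏ i ∈ Finset.range k, (1 + d)⁻¹ := by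
          apply Finset.prod_le_prod
          · intro i _
            exact (inv_pos.mpr (by nlinarith [hαpos i])).le
          · intro i _
            apply inv_anti₀ h1d
            linarith [hdα i]
      _ = ((1 + d) ^ k)⁻¹ := by
          rw [Finset.prod_const, Finset.card_range, ← inv_pow]
end

section
/- Let μ ≥ 0, L > 0, let h : V → ℝ be convex, differentiable with L-Lipschitz gradient, let g : V → ℝ be convex, and set f = h + g; assume f is μ-convex in the subgradient sense and has global minimizer x*. Let γ₀ > 0, x₀, v₀ ∈ V, and suppose sequences (x_k, v_k, γ_k) and (p_{k+1}) satisfy: α_k = √(γ_k/L), β_k = 1/(Lα_k), p_{k+1} is a subgradient of g at x_{k+1}, (x_{k+1} - x_k)/α_k = v_k - x_{k+1} - β_k(∇h(x_k) + p_{k+1}), (v_{k+1} - v_k)/α_k = (μ/γ_k)(x_{k+1} - v_{k+1}) - (1/γ_k)(∇h(x_{k+1}) + p_{k+1}), (γ_{k+1} - γ_k)/α_k = μ - γ_{k+1}. Define L_k = f(x_k) - f(x*) + (γ_k/2)‖v_k - x*‖². Then for every k ≥ 0, L_{k+1} ≤ L_k/(1 + α_k). -/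
/-!
Writing `Q = ∇h(x_{k+1}) + p_{k+1}` (a subgradient of `f` at `x_{k+1}`) and
`S = ∇h(x_k) + p_{k+1}`, three inequalities drive the estimate: `μ`-convexity of `f` between
`x_{k+1}` and `x*`, weighted by `α_k`; cocoercivity of `∇h` together with the subgradient
inequality of `g`, between `x_{k+1}` and `x_k`; and the recursion `γ_{k+1}(1 + α_k) = γ_k + α_k μ`.
After solving the update equations for `Q` and `S` and using `γ_k = L α_k²`, what is left is a
quadratic form in the iterates that is identically `-(μ² + Lα_kμ)‖x_{k+1} - v_{k+1}‖² - ‖S‖²`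
up to the factor `2L`, hence nonpositive.
-/

open scoped RealInnerProductSpace

open Set

section SmoothConvex

variable {V : Type*} [NormedAddCommGroup V] [InnerProductSpace ℝ V] [CompleteSpace V]
  {h : V → ℝ} {h' : V → V}

lemma hasDerivAt_comp_smul_add_of_hasGradientAt (hdiff : ∀ z, HasGradientAt h (h' z) z)
    (y Δ : V) (t : ℝ) :
    HasDerivAt (fun s : ℝ => h (s • Δ + y)) ⟪h' (t • Δ + y), Δ⟫ t := by
  have hline : HasDerivAt (fun s : ℝ => s • Δ + y) Δ t := by
    simpa using ((hasDerivAt_id t).smul_const Δ).add_const y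
  simpa [InnerProductSpace.toDual_apply_apply, Function.comp_def] using
    (hdiff (t • Δ + y)).hasFDerivAt.comp_hasDerivAt t hline

lemma ConvexOn.add_inner_gradient_le (hconv : ConvexOn ℝ univ h)
    (hdiff : ∀ z, HasGradientAt h (h' z) z) (y u : V) :
    h y + ⟪h' y, u - y⟫ ≤ h u := by
  have hconv_line : ConvexOn ℝ univ (fun s : ℝ => h (s • (u - y) + y)) := by
    have hline : (fun s : ℝ => h (s • (u - y) + y)) = h ∘ AffineMap.lineMap y u := by
      funext s
      simp [AffineMap.lineMap_apply_module']
    simpa [hline] using hconv.comp_affineMap (AffineMap.lineMap y u)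
  have hderiv := hasDerivAt_comp_smul_add_of_hasGradientAt hdiff y (u - y) 0
  have hslope := hconv_line.le_slope_of_hasDerivAt (mem_univ 0) (mem_univ 1) one_pos
    (by simpa using hderiv)
  simp only [slope_def_field, sub_zero, div_one, one_smul, sub_add_cancel, zero_smul,
    zero_add] at hslope
  linarith

lemma le_add_inner_gradient_add_sq_norm {L : ℝ} (hdiff : ∀ z, HasGradientAt h (h' z) z)
    (hlip : ∀ z w, ‖h' z - h' w‖ ≤ L * ‖z - w‖) (y u : V) :
    h u ≤ h y + ⟪h' y, u - y⟫ + L / 2 * ‖u - y‖ ^ 2 := by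
  set Δ := u - y
  set ψ : ℝ → ℝ := fun t => h (t • Δ + y) - t * ⟪h' y, Δ⟫ - t ^ 2 * (L / 2 * ‖Δ‖ ^ 2)
  have hψ : ∀ t : ℝ, HasDerivAt ψ
      (⟪h' (t • Δ + y), Δ⟫ - ⟪h' y, Δ⟫ - 2 * t * (L / 2 * ‖Δ‖ ^ 2)) t := fun t => by
    have hsq : HasDerivAt (fun t : ℝ => t ^ 2 * (L / 2 * ‖Δ‖ ^ 2))
        (2 * t * (L / 2 * ‖Δ‖ ^ 2)) t := by
      simpa using (hasDerivAt_pow 2 t).mul_const (L / 2 * ‖Δ‖ ^ 2)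
    exact ((hasDerivAt_comp_smul_add_of_hasGradientAt hdiff y Δ t).sub
      (by simpa using (hasDerivAt_id t).mul_const ⟪h' y, Δ⟫)).sub hsq
  have hanti : AntitoneOn ψ (Icc 0 1) := by
    refine antitoneOn_of_hasDerivWithinAt_nonpos (convex_Icc 0 1)
      (fun t _ => (hψ t).continuousAt.continuousWithinAt)
      (fun t _ => (hψ t).hasDerivWithinAt) fun t ht => ?_
    rw [interior_Icc] at ht
    have hgrad : ‖h' (t • Δ + y) - h' y‖ ≤ L * (t * ‖Δ‖) := by
      simpa [norm_smul, abs_of_pos ht.1] using hlip (t • Δ + y) y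
    have hcs : ⟪h' (t • Δ + y) - h' y, Δ⟫ ≤ L * (t * ‖Δ‖) * ‖Δ‖ :=
      (real_inner_le_norm _ _).trans (mul_le_mul_of_nonneg_right hgrad (norm_nonneg _))
    rw [inner_sub_left] at hcs
    linarith
  have hψ01 := hanti (left_mem_Icc.mpr zero_le_one) (right_mem_Icc.mpr zero_le_one) zero_le_one
  simp only [ψ, zero_smul, zero_add, one_smul, Δ, sub_add_cancel] at hψ01
  linarith

lemma ConvexOn.add_inner_gradient_add_sq_norm_gradient_sub_le {L : ℝ} (hL : 0 < L)
    (hconv : ConvexOn ℝ univ h) (hdiff : ∀ z, HasGradientAt h (h' z) z)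
    (hlip : ∀ z w, ‖h' z - h' w‖ ≤ L * ‖z - w‖) (y u : V) :
    h y + ⟪h' y, u - y⟫ + 1 / (2 * L) * ‖h' u - h' y‖ ^ 2 ≤ h u := by
  -- compare both sides at the gradient step `w` taken from `u`
  set δ := h' u - h' y
  set w := u - L⁻¹ • δ
  have hdescent := le_add_inner_gradient_add_sq_norm hdiff hlip u w
  have hconvex := hconv.add_inner_gradient_le hdiff y w
  have hwu : w - u = -(L⁻¹ • δ) := by simp [w]
  have hwy : w - y = (u - y) - L⁻¹ • δ := by simp only [w]; abel
  have hδ : L⁻¹ * ⟪h' u, δ⟫ - L⁻¹ * ⟪h' y, δ⟫ = L⁻¹ * ‖δ‖ ^ 2 := by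
    rw [← mul_sub, ← inner_sub_left, real_inner_self_eq_norm_sq]
  rw [hwu, norm_neg, norm_smul, Real.norm_eq_abs, abs_of_pos (inv_pos.mpr hL), inner_neg_right,
    real_inner_smul_right] at hdescent
  rw [hwy, inner_sub_right, real_inner_smul_right] at hconvex
  have hcoef : L / 2 * (L⁻¹ * ‖δ‖) ^ 2 = L⁻¹ * ‖δ‖ ^ 2 - 1 / (2 * L) * ‖δ‖ ^ 2 := by
    field_simp
    ring
  linarith

end SmoothConvex

section SplittingHNAG

variable {V : Type*} [NormedAddCommGroup V] [InnerProductSpace ℝ V]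

lemma splitting_hnag_gamma_succ_mul {μ γ γ' a : ℝ} (ha : a ≠ 0)
    (hγ' : (γ' - γ) / a = μ - γ') : γ' * (1 + a) = γ + a * μ := by
  rw [div_eq_iff ha] at hγ'
  linear_combination hγ'

lemma splitting_hnag_gamma_pos {μ L : ℝ} (hμ : 0 ≤ μ) (hL : 0 < L) {γ α : ℕ → ℝ}
    (hγ0 : 0 < γ 0) (hα : ∀ k, α k = √(γ k / L))
    (hγ : ∀ k, (γ (k + 1) - γ k) / α k = μ - γ (k + 1)) (k : ℕ) : 0 < γ k := by
  induction k with
  | zero => exact hγ0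
  | succ k ih =>
    have hαk : 0 < α k := hα k ▸ Real.sqrt_pos.mpr (div_pos ih hL)
    have hmul := splitting_hnag_gamma_succ_mul hαk.ne' (hγ k)
    exact pos_of_mul_pos_left (hmul ▸ by positivity) (by positivity : 0 < 1 + α k).le

lemma splitting_hnag_energy_le {μ L a : ℝ} (hμ : 0 ≤ μ) (hL : 0 < L) (ha : 0 ≤ a)
    {x x' v v' z Q S : V}
    (hQ : Q = μ • (x' - v') - (L * a) • (v' - v))
    (hS : S = (L * a) • (v - x') - L • (x' - x)) :
    (L * a ^ 2 + a * μ) / 2 * ‖v' - z‖ ^ 2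
      ≤ L * a ^ 2 / 2 * ‖v - z‖ ^ 2 + a * (⟪Q, z - x'⟫ + μ / 2 * ‖z - x'‖ ^ 2)
        + (⟪Q, x - x'⟫ + 1 / (2 * L) * ‖S - Q‖ ^ 2) := by
  have hid : L * (L * a ^ 2 + a * μ) * ‖v' - z‖ ^ 2 + (μ ^ 2 + L * a * μ) * ‖x' - v'‖ ^ 2
      + ‖S‖ ^ 2 = L ^ 2 * a ^ 2 * ‖v - z‖ ^ 2 + 2 * L * a * (⟪Q, z - x'⟫ + μ / 2 * ‖z - x'‖ ^ 2)
        + 2 * L * ⟪Q, x - x'⟫ + ‖S - Q‖ ^ 2 := by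
    subst hQ hS
    simp only [← real_inner_self_eq_norm_sq, inner_sub_left, inner_sub_right,
      real_inner_smul_left, real_inner_smul_right]
    simp only [real_inner_comm x x', real_inner_comm x v, real_inner_comm x v',
      real_inner_comm x' v, real_inner_comm x' v', real_inner_comm x' z,
      real_inner_comm v v', real_inner_comm v z, real_inner_comm v' z]
    ring
  have hnonneg : 0 ≤ (μ ^ 2 + L * a * μ) * ‖x' - v'‖ ^ 2 + ‖S‖ ^ 2 := by positivity
  have h2L : 2 * L * (1 / (2 * L) * ‖S - Q‖ ^ 2) = ‖S - Q‖ ^ 2 := by field_simp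
  nlinarith

lemma splitting_hnag_eq_of_x_update {L a : ℝ} (hL : 0 < L) (ha : 0 < a) {x x' v S : V}
    (hx : a⁻¹ • (x' - x) = v - x' - (1 / (L * a)) • S) :
    S = (L * a) • (v - x') - L • (x' - x) := by
  calc S = (L * a) • ((1 / (L * a)) • S) := by
        rw [smul_smul, mul_one_div_cancel (by positivity), one_smul]
    _ = (L * a) • (v - x' - a⁻¹ • (x' - x)) := by rw [hx]; abel_nf
    _ = (L * a) • (v - x') - L • (x' - x) := by match_scalars <;> field_simp

lemma splitting_hnag_eq_of_v_update {μ L a : ℝ} (hL : 0 < L) (ha : 0 < a) {x' v v' Q : V}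
    (hv : a⁻¹ • (v' - v) = (μ / (L * a ^ 2)) • (x' - v') - (1 / (L * a ^ 2)) • Q) :
    Q = μ • (x' - v') - (L * a) • (v' - v) := by
  calc Q = (L * a ^ 2) • ((1 / (L * a ^ 2)) • Q) := by
        rw [smul_smul, mul_one_div_cancel (by positivity), one_smul]
    _ = (L * a ^ 2) • ((μ / (L * a ^ 2)) • (x' - v') - a⁻¹ • (v' - v)) := by rw [hv]; abel_nf
    _ = μ • (x' - v') - (L * a) • (v' - v) := by match_scalars <;> field_simp

variable [CompleteSpace V]

theorem splitting_hnag_lyapunov_step {μ L : ℝ} (hμ : 0 ≤ μ) (hL : 0 < L)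
    {h g f : V → ℝ} {h' : V → V} (hconvh : ConvexOn ℝ univ h)
    (hdiffh : ∀ z, HasGradientAt h (h' z) z) (hlip : ∀ z w : V, ‖h' z - h' w‖ ≤ L * ‖z - w‖)
    (hf : ∀ z, f z = h z + g z)
    (hfconv : ∀ z w q : V, (∀ u, f u ≥ f w + ⟪q, u - w⟫) →
      f z - f w - ⟪q, z - w⟫ ≥ μ / 2 * ‖z - w‖ ^ 2)
    {xstar x x' v v' p : V} {γ γ' a : ℝ} (hγ : 0 < γ) (ha : a = √(γ / L))
    (hp : ∀ u, g u ≥ g x' + ⟪p, u - x'⟫)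
    (hx : a⁻¹ • (x' - x) = v - x' - (1 / (L * a)) • (h' x + p))
    (hv : a⁻¹ • (v' - v) = (μ / γ) • (x' - v') - (1 / γ) • (h' x' + p))
    (hγ' : (γ' - γ) / a = μ - γ') :
    f x' - f xstar + γ' / 2 * ‖v' - xstar‖ ^ 2
      ≤ (f x - f xstar + γ / 2 * ‖v - xstar‖ ^ 2) / (1 + a) := by
  have ha0 : 0 < a := ha ▸ Real.sqrt_pos.mpr (div_pos hγ hL)
  obtain rfl : γ = L * a ^ 2 := by
    rw [ha, Real.sq_sqrt (div_pos hγ hL).le]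
    field_simp
  have hS := splitting_hnag_eq_of_x_update hL ha0 hx
  have hQ := splitting_hnag_eq_of_v_update hL ha0 hv
  have hsub : ∀ u, f u ≥ f x' + ⟪h' x' + p, u - x'⟫ := fun u => by
    have := hconvh.add_inner_gradient_le hdiffh x' u
    rw [hf, hf, inner_add_left]
    linarith [hp u]
  have hstrong := hfconv xstar x' _ hsub
  have hcoco : f x' + ⟪h' x' + p, x - x'⟫ + 1 / (2 * L) * ‖(h' x + p) - (h' x' + p)‖ ^ 2
      ≤ f x := by
    have := hconvh.add_inner_gradient_add_sq_norm_gradient_sub_le hL hdiffh hlip x' x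
    rw [hf, hf, inner_add_left, add_sub_add_right_eq_sub]
    linarith [hp x]
  have henergy := splitting_hnag_energy_le (z := xstar) hμ hL ha0.le hQ hS
  have hγ_succ := splitting_hnag_gamma_succ_mul ha0.ne' hγ'
  rw [le_div_iff₀ (by positivity)]
  linear_combination (‖v' - xstar‖ ^ 2 / 2) * hγ_succ + henergy + hcoco + a * hstrong

end SplittingHNAG

theorem splitting_hnag_one_step_contraction_general
    {V : Type*} [NormedAddCommGroup V] [InnerProductSpace ℝ V] [CompleteSpace V]
    (μ L : ℝ) (hμ : 0 ≤ μ) (hL : 0 < L)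
    (h g f : V → ℝ) (h' : V → V)
    (hconvh : ConvexOn ℝ Set.univ h)
    (hdiffh : ∀ z, HasGradientAt h (h' z) z)
    (hlip : ∀ z w : V, ‖h' z - h' w‖ ≤ L * ‖z - w‖)
    (hf : ∀ z, f z = h z + g z)
    (hfconv : ∀ z w q : V, (∀ u, f u ≥ f w + ⟪q, u - w⟫) →
      f z - f w - ⟪q, z - w⟫ ≥ μ / 2 * ‖z - w‖ ^ 2)
    (xstar : V)
    (x v p : ℕ → V) (γ α β : ℕ → ℝ) (hγ0 : 0 < γ 0)
    (hαdef : ∀ k, α k = Real.sqrt (γ k / L)) (hβ : ∀ k, β k = 1 / (L * α k))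
    (hp : ∀ k, ∀ u, g u ≥ g (x (k + 1)) + ⟪p (k + 1), u - x (k + 1)⟫)
    (h1 : ∀ k, (α k)⁻¹ • (x (k + 1) - x k)
        = v k - x (k + 1) - β k • (h' (x k) + p (k + 1)))
    (h2 : ∀ k, (α k)⁻¹ • (v (k + 1) - v k)
        = (μ / γ k) • (x (k + 1) - v (k + 1))
          - (1 / γ k) • (h' (x (k + 1)) + p (k + 1)))
    (h3 : ∀ k, (γ (k + 1) - γ k) / α k = μ - γ (k + 1))
    (k : ℕ) :
    (f (x (k + 1)) - f xstar + γ (k + 1) / 2 * ‖v (k + 1) - xstar‖ ^ 2)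
      ≤ (f (x k) - f xstar + γ k / 2 * ‖v k - xstar‖ ^ 2) / (1 + α k) := by
  refine splitting_hnag_lyapunov_step hμ hL hconvh hdiffh hlip hf hfconv
    (splitting_hnag_gamma_pos hμ hL hγ0 hαdef h3 k) (hαdef k) (hp k) ?_ (h2 k) (h3 k)
  rw [h1 k, hβ k]

/-- One-step contraction `L_{k+1} ≤ L_k/(1+α_k)` for the splitting HNAG scheme
(Algorithm 2) applied to the composite objective `f = h + g`, where `h` is convex
with `L`-Lipschitz gradient, `g` is convex, `f` is `μ`-convex in the subgradient
sense, `α_k = √(γ_k/L)`, `β_k = 1/(Lα_k)` and `p_{k+1} ∈ ∂g(x_{k+1})`. -/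
theorem splitting_hnag_one_step_contraction
    {V : Type*} [NormedAddCommGroup V] [InnerProductSpace ℝ V] [CompleteSpace V]
    (μ L : ℝ) (hμ : 0 ≤ μ) (hL : 0 < L)
    (h g f : V → ℝ) (h' : V → V)
    (hconvh : ConvexOn ℝ Set.univ h)
    (hdiffh : ∀ z, HasGradientAt h (h' z) z)
    (hlip : ∀ z w : V, ‖h' z - h' w‖ ≤ L * ‖z - w‖)
    (hconvg : ConvexOn ℝ Set.univ g)
    (hf : ∀ z, f z = h z + g z)
    (hfconv : ∀ z w q : V, (∀ u, f u ≥ f w + ⟪q, u - w⟫) →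
      f z - f w - ⟪q, z - w⟫ ≥ μ / 2 * ‖z - w‖ ^ 2)
    (xstar : V) (hmin : ∀ z, f xstar ≤ f z)
    (x v p : ℕ → V) (γ α β : ℕ → ℝ) (hγ0 : 0 < γ 0)
    (hαdef : ∀ k, α k = Real.sqrt (γ k / L)) (hβ : ∀ k, β k = 1 / (L * α k))
    (hp : ∀ k, ∀ u, g u ≥ g (x (k + 1)) + ⟪p (k + 1), u - x (k + 1)⟫)
    (h1 : ∀ k, (α k)⁻¹ • (x (k + 1) - x k)
        = v k - x (k + 1) - β k • (h' (x k) + p (k + 1)))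
    (h2 : ∀ k, (α k)⁻¹ • (v (k + 1) - v k)
        = (μ / γ k) • (x (k + 1) - v (k + 1))
          - (1 / γ k) • (h' (x (k + 1)) + p (k + 1)))
    (h3 : ∀ k, (γ (k + 1) - γ k) / α k = μ - γ (k + 1))
    (k : ℕ) :
    (f (x (k + 1)) - f xstar + γ (k + 1) / 2 * ‖v (k + 1) - xstar‖ ^ 2)
      ≤ (f (x k) - f xstar + γ k / 2 * ‖v k - xstar‖ ^ 2) / (1 + α k) :=
  splitting_hnag_one_step_contraction_general μ L hμ hL h g f h' hconvh hdiffh hlip hf hfconv xstar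
    x v p γ α β hγ0 hαdef hβ hp h1 h2 h3 k
end
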